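/- arXiv:2007.03217 — 10 statements merged into one kernel-verified Lean document; each statement's English description precedes it below -/
import Mathlib

section
/- Let G be a finite p-group and let a, b ∈ G have orders p and p^i (i ≥ 1) respectively. If there is a path between a and b in the deleted enhanced power graph (the enhanced power graph with the identity removed), then ⟨a⟩ ⊆ ⟨b⟩. In particular, if both a and b have order p, then ⟨a⟩ = ⟨b⟩. -/
/-- The enhanced power graph of a group `G`: vertices are elements of `G`,
with distinct `u`, `v` adjacent iff both are powers of a common element. -/
def enhancedPowerGraph (G : Type*) [Group G] : SimpleGraph G where
  Adj u v := u ≠ v ∧ ∃ w : G, u ∈ Subgroup.zpowers w ∧ v ∈ Subgroup.zpowers w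
  symm := by
    constructor
    rintro u v ⟨h, w, hu, hv⟩
    exact ⟨h.symm, w, hv, hu⟩
  loopless := by
    constructor
    rintro u ⟨h, -⟩
    exact h rfl

/-- A dominating vertex: adjacent to every other vertex. -/
def IsDominating {V : Type*} (Γ : SimpleGraph V) (v : V) : Prop :=
  ∀ u, u ≠ v → Γ.Adj v u

/-- The vertex connectivity: the least size of a set of vertices whose removal
leaves a graph that is not connected. -/
noncomputable def vertexConnectivity {V : Type*} (Γ : SimpleGraph V) : ℕ :=
  sInf {n | ∃ s : Set V, s.ncard = n ∧ ¬ (Γ.induce sᶜ).Connected}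

/-!
Every nontrivial element `u` of a `p`-group has the subgroup `⟨u ^ (orderOf u / p)⟩` of
order `p`. Adjacent vertices `u`, `v` lie in a common cyclic group `⟨w⟩`, and a finite cyclic
group has only one subgroup of order `p`, so this subgroup is constant along paths in the
deleted enhanced power graph. For `a` of order `p` it is `⟨a⟩`, and for `b` it lies in
`⟨b⟩`.
-/

open Subgroup

theorem SimpleGraph.Reachable.apply_eq_of_forall_adj {V β : Type*} {Γ : SimpleGraph V}
    (f : V → β) (hf : ∀ u v, Γ.Adj u v → f u = f v) {u v : V} (h : Γ.Reachable u v) :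
    f u = f v := by
  rw [reachable_iff_reflTransGen] at h
  induction h with
  | refl => rfl
  | tail _ hadj ih => exact ih.trans (hf _ _ hadj)

theorem IsCyclic.mem_zpowers_of_orderOf_eq {α : Type*} [Group α] [Finite α] [IsCyclic α]
    {x y : α} (h : orderOf x = orderOf y) : x ∈ zpowers y := by
  classical
  have := Fintype.ofFinite α
  -- `⟨y⟩` already fills up the at most `orderOf y` solutions of `z ^ orderOf y = 1`.
  let roots : Finset α := {z | z ^ orderOf y = 1}
  have hsub : (zpowers y : Set α).toFinset ⊆ roots := fun z hz => by
    simp only [Set.mem_toFinset, SetLike.mem_coe] at hz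
    simpa [roots] using orderOf_dvd_iff_pow_eq_one.mp (orderOf_dvd_of_mem_zpowers hz)
  have hcard : roots.card ≤ (zpowers y : Set α).toFinset.card := by
    rw [Set.toFinset_card, ← Nat.card_eq_fintype_card, SetLike.coe_sort_coe, Nat.card_zpowers]
    exact IsCyclic.card_pow_eq_one_le (orderOf_pos y)
  have hx : x ∈ roots := by simp [roots, ← h, pow_orderOf_eq_one]
  rw [← Finset.eq_of_subset_of_card_le hsub hcard] at hx
  simpa using hx

theorem zpowers_eq_zpowers_of_mem_zpowers_of_orderOf_eq {G : Type*} [Group G] {x y w : G}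
    (hw : IsOfFinOrder w) (hx : x ∈ zpowers w) (hy : y ∈ zpowers w)
    (h : orderOf x = orderOf y) : zpowers x = zpowers y := by
  have : Finite (zpowers w) := hw.finite_zpowers.to_subtype
  let x' : zpowers w := ⟨x, hx⟩
  let y' : zpowers w := ⟨y, hy⟩
  have h' : orderOf x' = orderOf y' := by rwa [Subgroup.orderOf_mk, Subgroup.orderOf_mk]
  have hxy : zpowers x' = zpowers y' := le_antisymm
    (zpowers_le.mpr (IsCyclic.mem_zpowers_of_orderOf_eq h'))
    (zpowers_le.mpr (IsCyclic.mem_zpowers_of_orderOf_eq h'.symm))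
  have := congrArg (map (zpowers w).subtype) hxy
  rwa [MonoidHom.map_zpowers, MonoidHom.map_zpowers] at this

theorem zpowers_pow_orderOf_div_eq_of_mem_zpowers {G : Type*} [Group G] {p : ℕ} {u v w : G}
    (hw : IsOfFinOrder w) (hu : u ∈ zpowers w) (hv : v ∈ zpowers w)
    (hpu : p ∣ orderOf u) (hpv : p ∣ orderOf v) :
    zpowers (u ^ (orderOf u / p)) = zpowers (v ^ (orderOf v / p)) := by
  have hw0 := hw.orderOf_pos.ne'
  refine zpowers_eq_zpowers_of_mem_zpowers_of_orderOf_eq hw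
    (zpowers_le.mpr hu (pow_mem (mem_zpowers u) _))
    (zpowers_le.mpr hv (pow_mem (mem_zpowers v) _)) ?_
  rw [orderOf_pow_orderOf_div (ne_zero_of_dvd_ne_zero hw0 (orderOf_dvd_of_mem_zpowers hu)) hpu,
    orderOf_pow_orderOf_div (ne_zero_of_dvd_ne_zero hw0 (orderOf_dvd_of_mem_zpowers hv)) hpv]

theorem IsPGroup.zpowers_pow_orderOf_div_eq_of_reachable {p : ℕ} [Fact p.Prime] {G : Type*}
    [Group G] (hpG : IsPGroup p G) {u v : {g : G | g ≠ 1}}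
    (h : ((enhancedPowerGraph G).induce {g : G | g ≠ 1}).Reachable u v) :
    zpowers ((u : G) ^ (orderOf (u : G) / p)) = zpowers ((v : G) ^ (orderOf (v : G) / p)) := by
  refine h.apply_eq_of_forall_adj
    (fun u : {g : G | g ≠ 1} => zpowers ((u : G) ^ (orderOf (u : G) / p))) ?_
  rintro ⟨u, hu⟩ ⟨v, hv⟩ ⟨-, w, huw, hvw⟩
  exact zpowers_pow_orderOf_div_eq_of_mem_zpowers
    (hpG.isOfFinOrder (Fact.out : p.Prime).ne_zero w) huw hvw
    (hpG.dvd_orderOf hu) (hpG.dvd_orderOf hv)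

theorem stmt_1_general {p : ℕ} (hp : p.Prime) {G : Type*} [Group G]
    (hpG : IsPGroup p G) (a b : G) (ha : a ≠ 1) (hb : b ≠ 1)
    (hoa : orderOf a = p) {i : ℕ} (hob : orderOf b = p ^ i)
    (hpath : ((enhancedPowerGraph G).induce {g : G | g ≠ 1}).Reachable
      ⟨a, ha⟩ ⟨b, hb⟩) :
    Subgroup.zpowers a ≤ Subgroup.zpowers b ∧
      (i = 1 → Subgroup.zpowers a = Subgroup.zpowers b) := by
  have := Fact.mk hp
  have hab := hpG.zpowers_pow_orderOf_div_eq_of_reachable hpath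
  simp only [hoa, Nat.div_self hp.pos, pow_one] at hab
  refine ⟨hab ▸ zpowers_le.mpr (pow_mem (mem_zpowers b) _), ?_⟩
  rintro rfl
  rwa [hob, pow_one, Nat.div_self hp.pos, pow_one] at hab

theorem stmt_1 {p : ℕ} (hp : p.Prime) {G : Type*} [Group G] [Finite G]
    (hpG : IsPGroup p G) (a b : G) (ha : a ≠ 1) (hb : b ≠ 1)
    (hoa : orderOf a = p) {i : ℕ} (hi : 1 ≤ i) (hob : orderOf b = p ^ i)
    (hpath : ((enhancedPowerGraph G).induce {g : G | g ≠ 1}).Reachable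
      ⟨a, ha⟩ ⟨b, hb⟩) :
    Subgroup.zpowers a ≤ Subgroup.zpowers b ∧
      (i = 1 → Subgroup.zpowers a = Subgroup.zpowers b) :=
  stmt_1_general hp hpG a b ha hb hoa hob hpath
end

section
/- Let G be a finite non-cyclic group and let v ≠ e be a dominating vertex of the enhanced power graph of G. Then there exists a prime p dividing o(v) such that G has a unique subgroup of order p. -/
/-!
If `v` is dominating, every element `u` lies in a common cyclic subgroup `⟨w⟩` with `v`. A finite
cyclic group has a unique subgroup of each order, formed by the solutions of `x ^ d = 1`; so for
`d ∣ o(v)` every element of a subgroup of order `d` lies in `⟨v ^ (o(v) / d)⟩`, which is therefore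
the only subgroup of order `d`. Any prime divisor `d` of `o(v) ≠ 1` then does the job.
-/

open Finset Subgroup

-- A cyclic group has at most `orderOf b` solutions of `x ^ orderOf b = 1`, and the powers of `b`
-- already provide that many.
theorem IsCyclic.mem_zpowers_of_pow_orderOf_eq_one {C : Type*} [Group C] [IsCyclic C] [Finite C]
    {a b : C} (h : a ^ orderOf b = 1) : a ∈ zpowers b := by
  classical
  have : Fintype C := Fintype.ofFinite C
  let S : Finset C := {x | x ^ orderOf b = 1}
  have hsub : (zpowers b : Set C).toFinset ⊆ S := by
    intro x hx
    obtain ⟨k, rfl⟩ := Set.mem_toFinset.mp hx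
    rw [Finset.mem_filter, ← zpow_natCast, ← zpow_mul, mul_comm, zpow_mul, zpow_natCast,
      pow_orderOf_eq_one, one_zpow]
    exact ⟨Finset.mem_univ _, rfl⟩
  have hcard : #S ≤ #(zpowers b : Set C).toFinset := by
    rw [Set.toFinset_card, ← Nat.card_eq_fintype_card, SetLike.coe_sort_coe, Nat.card_zpowers]
    exact IsCyclic.card_pow_eq_one_le (orderOf_pos b)
  have hmem : a ∈ S := by simpa [S] using h
  rw [← Finset.eq_of_subset_of_card_le hsub hcard] at hmem
  exact Set.mem_toFinset.mp hmem

theorem mem_zpowers_of_orderOf_dvd {G : Type*} [Group G] [Finite G] {w a b : G}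
    (ha : a ∈ zpowers w) (hb : b ∈ zpowers w) (hab : orderOf a ∣ orderOf b) :
    a ∈ zpowers b := by
  have hpow : (⟨a, ha⟩ : zpowers w) ^ orderOf (⟨b, hb⟩ : zpowers w) = 1 := by
    rw [orderOf_mk, Subtype.ext_iff, SubmonoidClass.coe_pow, OneMemClass.coe_one,
      ← orderOf_dvd_iff_pow_eq_one]
    exact hab
  obtain ⟨k, hk⟩ := IsCyclic.mem_zpowers_of_pow_orderOf_eq_one hpow
  exact ⟨k, congrArg Subtype.val hk⟩

theorem existsUnique_subgroup_card_of_dvd_orderOf {G : Type*} [Group G] [Finite G] {v : G}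
    (hv : ∀ u : G, ∃ w, v ∈ zpowers w ∧ u ∈ zpowers w) {d : ℕ} (hd : d ∣ orderOf v) :
    ∃! H : Subgroup G, Nat.card H = d := by
  have hcard : Nat.card (zpowers (v ^ (orderOf v / d))) = d := by
    rw [Nat.card_zpowers, orderOf_pow_orderOf_div (orderOf_pos v).ne' hd]
  refine ⟨zpowers (v ^ (orderOf v / d)), hcard, fun H hH => ?_⟩
  refine eq_of_le_of_card_ge (fun u hu => ?_) (by rw [hH, hcard])
  obtain ⟨w, hvw, huw⟩ := hv u
  refine mem_zpowers_of_orderOf_dvd huw (pow_mem hvw _) ?_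
  rw [orderOf_pow_orderOf_div (orderOf_pos v).ne' hd, ← hH]
  exact Subgroup.orderOf_dvd_natCard H hu

theorem forall_exists_zpowers_of_isDominating {G : Type*} [Group G] {v : G}
    (hdom : IsDominating (enhancedPowerGraph G) v) (u : G) :
    ∃ w, v ∈ zpowers w ∧ u ∈ zpowers w := by
  by_cases huv : u = v
  · exact ⟨v, mem_zpowers v, huv ▸ mem_zpowers u⟩
  · exact (hdom u huv).2

theorem stmt_2_general {G : Type*} [Group G] [Finite G]
    (v : G) (hv : v ≠ 1) (hdom : IsDominating (enhancedPowerGraph G) v) :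
    ∃ p : ℕ, p.Prime ∧ p ∣ orderOf v ∧ ∃! H : Subgroup G, Nat.card H = p := by
  have hp : (orderOf v).minFac.Prime := Nat.minFac_prime (orderOf_eq_one_iff.not.mpr hv)
  exact ⟨_, hp, Nat.minFac_dvd _, existsUnique_subgroup_card_of_dvd_orderOf
    (forall_exists_zpowers_of_isDominating hdom) (Nat.minFac_dvd _)⟩

theorem stmt_2 {G : Type*} [Group G] [Finite G] (hnc : ¬ IsCyclic G)
    (v : G) (hv : v ≠ 1) (hdom : IsDominating (enhancedPowerGraph G) v) :
    ∃ p : ℕ, p.Prime ∧ p ∣ orderOf v ∧ ∃! H : Subgroup G, Nat.card H = p :=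
  stmt_2_general v hv hdom
end

section
/- Let G be a finite non-cyclic abelian group. Then the vertex connectivity of the enhanced power graph of G equals 1 if and only if G is a p-group for some prime p. -/
/-! The identity is a dominating vertex of the enhanced power graph, so no set of vertices
avoiding it separates the graph: the connectivity is `1` exactly when deleting the identity
disconnects the graph.

If two distinct primes divide `|G|`, then elements `x`, `y` of coprime orders are both powers
of `x * y`; every nontrivial element has a power of prime order, and through such elements all
nontrivial elements are joined to a fixed element of order `p`.

If `G` is a `p`-group, a nontrivial cyclic subgroup contains exactly one subgroup of order `p`,
and adjacent nontrivial elements generate cyclic subgroups inside a common cyclic subgroup, so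
they contain the same subgroup of order `p`. A non-cyclic abelian `p`-group has two distinct
subgroups of order `p`: otherwise `x ↦ x ^ p` has at most `p` elements in its kernel, hence
`x ↦ x ^ (p ^ k)` at most `p ^ k`, which makes `G` cyclic. -/

open Subgroup

section CyclicSubgroups

variable {G : Type*} [Group G] [Finite G]

lemma mem_zpowers_pow_orderOf_div {w y : G} {d : ℕ} (hd : d ∣ orderOf w) (hy : y ∈ zpowers w)
    (hyd : y ^ d = 1) : y ∈ zpowers (w ^ (orderOf w / d)) := by
  obtain ⟨k, rfl⟩ := mem_powers_iff_mem_zpowers.2 hy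
  obtain ⟨m, hm⟩ := hd
  have hd0 : 0 < d := Nat.pos_of_ne_zero fun h => (orderOf_pos w).ne' (by simp [hm, h])
  have hmk : m ∣ k := by
    have : orderOf w ∣ k * d := orderOf_dvd_of_pow_eq_one (by rwa [pow_mul])
    rw [hm, mul_comm d m] at this
    exact Nat.dvd_of_mul_dvd_mul_right hd0 this
  obtain ⟨t, rfl⟩ := hmk
  show w ^ (m * t) ∈ _
  rw [hm, Nat.mul_div_cancel_left m hd0, pow_mul]
  exact npow_mem_zpowers _ t

lemma zpowers_eq_of_mem_zpowers_of_orderOf_eq {w y z : G} (hy : y ∈ zpowers w)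
    (hz : z ∈ zpowers w) (hyz : orderOf y = orderOf z) : zpowers y = zpowers z := by
  suffices key : ∀ x ∈ zpowers w, zpowers x = zpowers (w ^ (orderOf w / orderOf x)) by
    rw [key y hy, key z hz, hyz]
  intro x hx
  have hxw : orderOf x ∣ orderOf w := orderOf_dvd_of_mem_zpowers hx
  refine eq_of_le_of_card_ge (zpowers_le.2 ?_) ?_
  · exact mem_zpowers_pow_orderOf_div hxw hx (pow_orderOf_eq_one x)
  · rw [Nat.card_zpowers, Nat.card_zpowers, orderOf_pow_orderOf_div (orderOf_pos w).ne' hxw]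

end CyclicSubgroups

lemma mem_zpowers_mul_of_coprime {G : Type*} [Group G] {x y : G} (hxy : Commute x y)
    (h : (orderOf x).Coprime (orderOf y)) : x ∈ zpowers (x * y) := by
  have hpow : (x * y) ^ orderOf y = x ^ orderOf y := by
    rw [hxy.mul_pow, pow_orderOf_eq_one, mul_one]
  exact zpowers_le.2 (hpow ▸ npow_mem_zpowers _ _) (mem_zpowers_pow_iff.2 h.symm)

section PowerKernels

variable {G : Type*} [CommGroup G] [Finite G]

lemma card_ker_powMonoidHom_mul_le (a b : ℕ) :
    Nat.card (powMonoidHom (a * b) : G →* G).ker ≤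
      Nat.card (powMonoidHom a : G →* G).ker * Nat.card (powMonoidHom b : G →* G).ker := by
  set f := (powMonoidHom b : G →* G).domRestrict (powMonoidHom (a * b) : G →* G).ker
  have hrange : f.range ≤ (powMonoidHom a : G →* G).ker := by
    rintro - ⟨x, rfl⟩
    show ((x : G) ^ b) ^ a = 1
    rw [← pow_mul, mul_comm b a]
    exact x.2
  have hker : Nat.card f.ker ≤ Nat.card (powMonoidHom b : G →* G).ker :=
    Nat.card_le_card_of_injective (fun x => ⟨x.1.1, x.2⟩) fun x y h =>
      Subtype.ext (Subtype.ext (Subtype.mk.inj h))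
  calc _ = Nat.card f.ker * Nat.card f.range := by rw [← index_ker, card_mul_index]
    _ ≤ _ := (Nat.mul_le_mul hker (card_le_of_le hrange)).trans_eq (mul_comm _ _)

lemma card_ker_powMonoidHom_pow_le (n k : ℕ) :
    Nat.card (powMonoidHom (n ^ k) : G →* G).ker ≤
      Nat.card (powMonoidHom n : G →* G).ker ^ k := by
  induction k with
  | zero => simp
  | succ k ih =>
    rw [pow_succ, pow_succ]
    exact (card_ker_powMonoidHom_mul_le _ _).trans (by gcongr)

lemma IsPGroup.isCyclic_of_card_ker_powMonoidHom_le {p : ℕ} [Fact p.Prime] (hG : IsPGroup p G)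
    (h : Nat.card (powMonoidHom p : G →* G).ker ≤ p) : IsCyclic G := by
  classical
  cases nonempty_fintype G
  refine isCyclic_of_card_pow_eq_one_le fun n hn => ?_
  obtain ⟨e, he⟩ := hG.exists_card_eq
  have hd : n.gcd (Nat.card G) ∣ p ^ e := he ▸ Nat.gcd_dvd_right _ _
  obtain ⟨k, -, hk⟩ := (Nat.dvd_prime_pow Fact.out).1 hd
  have hsub : ∀ x : G, x ^ n = 1 → x ∈ (powMonoidHom (p ^ k) : G →* G).ker := fun x hx => by
    rw [MonoidHom.mem_ker, powMonoidHom_apply, ← hk, ← orderOf_dvd_iff_pow_eq_one]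
    exact Nat.dvd_gcd (orderOf_dvd_of_pow_eq_one hx) (orderOf_dvd_natCard x)
  calc Finset.card {x : G | x ^ n = 1}
      ≤ Nat.card (powMonoidHom (p ^ k) : G →* G).ker := by
        rw [← Nat.card_eq_finsetCard]
        exact Nat.card_le_card_of_injective (fun x => ⟨x, hsub x (Finset.mem_filter.1 x.2).2⟩)
          fun x y h => Subtype.ext (Subtype.mk.inj h)
    _ ≤ p ^ k := (card_ker_powMonoidHom_pow_le p k).trans (Nat.pow_le_pow_left h k)
    _ ≤ n := hk ▸ Nat.le_of_dvd hn (Nat.gcd_dvd_left n _)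

lemma IsPGroup.exists_zpowers_ne_of_not_isCyclic {p : ℕ} [Fact p.Prime] (hG : IsPGroup p G)
    (hnc : ¬ IsCyclic G) :
    ∃ a b : G, orderOf a = p ∧ orderOf b = p ∧ zpowers a ≠ zpowers b := by
  have : Nontrivial G := not_subsingleton_iff_nontrivial.1 fun _ => hnc inferInstance
  obtain ⟨n, hn, hcard⟩ := hG.nontrivial_iff_card.1 this
  obtain ⟨a, ha⟩ := exists_prime_orderOf_dvd_card' p (hcard ▸ dvd_pow_self p hn.ne')
  by_contra! hall
  refine hnc (hG.isCyclic_of_card_ker_powMonoidHom_le ?_)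
  have hle : (powMonoidHom p : G →* G).ker ≤ zpowers a := fun x hx => by
    rcases (Nat.dvd_prime Fact.out).1 (orderOf_dvd_of_pow_eq_one hx) with h | h
    · exact orderOf_eq_one_iff.1 h ▸ one_mem _
    · exact hall x a h ha ▸ mem_zpowers x
  calc _ ≤ Nat.card (zpowers a) := card_le_of_le hle
    _ = p := by rw [Nat.card_zpowers, ha]

end PowerKernels

lemma connected_induce_compl_of_isDominating {V : Type*} {Γ : SimpleGraph V} {v : V}
    (hv : IsDominating Γ v) {s : Set V} (hs : v ∉ s) : (Γ.induce sᶜ).Connected := by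
  have : Nonempty (sᶜ : Set V) := ⟨⟨v, hs⟩⟩
  suffices hub : ∀ u : (sᶜ : Set V), (Γ.induce sᶜ).Reachable ⟨v, hs⟩ u from
    .mk fun u w => (hub u).symm.trans (hub w)
  intro u
  by_cases h : (u : V) = v
  · rw [show u = ⟨v, hs⟩ from Subtype.ext h]
  · exact SimpleGraph.Adj.reachable (hv u h)

lemma vertexConnectivity_eq_one_iff_of_isDominating {V : Type*} [Finite V] {Γ : SimpleGraph V}
    {v : V} (hv : IsDominating Γ v) :
    vertexConnectivity Γ = 1 ↔ ¬ (Γ.induce ({v}ᶜ : Set V)).Connected := by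
  set S := {n | ∃ s : Set V, s.ncard = n ∧ ¬ (Γ.induce sᶜ).Connected}
  have h0 : 0 ∉ S := by
    rintro ⟨s, hs, hdis⟩
    obtain rfl := (Set.ncard_eq_zero (Set.toFinite s)).1 hs
    exact hdis (connected_induce_compl_of_isDominating hv (Set.notMem_empty v))
  constructor
  · intro h
    have hS : S.Nonempty :=
      Set.nonempty_iff_ne_empty.2 fun e => by simp [vertexConnectivity, S, e] at h
    obtain ⟨s, hs, hdis⟩ : 1 ∈ S := h ▸ Nat.sInf_mem hS
    obtain ⟨x, rfl⟩ := Set.ncard_eq_one.1 hs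
    obtain rfl : x = v := by
      by_contra hxv
      exact hdis (connected_induce_compl_of_isDominating hv
        (Set.notMem_singleton_iff.2 (Ne.symm hxv)))
    exact hdis
  · intro h
    have h1 : 1 ∈ S := ⟨{v}, Set.ncard_singleton v, h⟩
    exact le_antisymm (Nat.sInf_le h1)
      (Nat.one_le_iff_ne_zero.2 fun e => h0 (e ▸ Nat.sInf_mem ⟨1, h1⟩))

namespace enhancedPowerGraph

lemma isDominating_one (G : Type*) [Group G] : IsDominating (enhancedPowerGraph G) 1 :=
  fun u hu => ⟨hu.symm, u, one_mem _, mem_zpowers u⟩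

lemma reachable_induce_of_mem_zpowers {G : Type*} [Group G] {s : Set G} {x y : s} {w : G}
    (hx : (x : G) ∈ zpowers w) (hy : (y : G) ∈ zpowers w) :
    ((enhancedPowerGraph G).induce s).Reachable x y := by
  by_cases h : x = y
  · exact h ▸ .refl x
  · exact SimpleGraph.Adj.reachable ⟨fun e => h (Subtype.ext e), w, hx, hy⟩

lemma mem_zpowers_of_adj {G : Type*} [Group G] [Finite G] {p : ℕ} [Fact p.Prime]
    (hG : IsPGroup p G) {a u v : G} (ha : orderOf a = p)
    (hv : v ≠ 1) (huv : (enhancedPowerGraph G).Adj u v) (hau : a ∈ zpowers u) :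
    a ∈ zpowers v := by
  obtain ⟨-, w, huw, hvw⟩ := huv
  have hpv := hG.dvd_orderOf hv
  have hb : orderOf (v ^ (orderOf v / p)) = p := orderOf_pow_orderOf_div (orderOf_pos v).ne' hpv
  have hab : zpowers a = zpowers (v ^ (orderOf v / p)) :=
    zpowers_eq_of_mem_zpowers_of_orderOf_eq (zpowers_le.2 huw hau)
      (zpowers_le.2 hvw (npow_mem_zpowers _ _)) (ha.trans hb.symm)
  exact zpowers_le.2 (npow_mem_zpowers _ _) (hab ▸ mem_zpowers a)

lemma not_connected_induce_compl_one_of_isPGroup {G : Type*} [CommGroup G] [Finite G] {p : ℕ}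
    [Fact p.Prime] (hG : IsPGroup p G) (hnc : ¬ IsCyclic G) :
    ¬ ((enhancedPowerGraph G).induce ({1}ᶜ : Set G)).Connected := by
  obtain ⟨a, b, ha, hb, hab⟩ := hG.exists_zpowers_ne_of_not_isCyclic hnc
  have propagate {u v : ({1}ᶜ : Set G)} (W : ((enhancedPowerGraph G).induce {1}ᶜ).Walk u v) :
      a ∈ zpowers (u : G) → a ∈ zpowers (v : G) := by
    induction W with
    | nil => exact id
    | @cons _ v _ huv _ ih => exact fun hau => ih (mem_zpowers_of_adj hG ha v.2 huv hau)
  intro hc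
  obtain ⟨W⟩ :=
    hc.preconnected ⟨a, (orderOf_eq_prime_iff.1 ha).2⟩ ⟨b, (orderOf_eq_prime_iff.1 hb).2⟩
  exact hab (zpowers_eq_of_mem_zpowers_of_orderOf_eq (propagate W (mem_zpowers a))
    (mem_zpowers b) (ha.trans hb.symm))

lemma connected_induce_compl_one_of_prime_dvd {G : Type*} [CommGroup G] [Finite G] {p q : ℕ}
    (hp : p.Prime) (hq : q.Prime) (hpq : p ≠ q) (hpG : p ∣ Nat.card G)
    (hqG : q ∣ Nat.card G) :
    ((enhancedPowerGraph G).induce ({1}ᶜ : Set G)).Connected := by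
  have ne_one {x : G} (hx : (orderOf x).Prime) : x ≠ 1 := fun h =>
    hx.ne_one (orderOf_eq_one_iff.2 h)
  have reach_of_ne {x y : G} (hx : (orderOf x).Prime) (hy : (orderOf y).Prime)
      (hxy : orderOf x ≠ orderOf y) :
      ((enhancedPowerGraph G).induce {1}ᶜ).Reachable ⟨x, ne_one hx⟩ ⟨y, ne_one hy⟩ := by
    have hco := (Nat.coprime_primes hx hy).2 hxy
    exact reachable_induce_of_mem_zpowers (w := x * y) (mem_zpowers_mul_of_coprime (.all x y) hco)
      (mul_comm x y ▸ mem_zpowers_mul_of_coprime (.all y x) hco.symm)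
  have : Fact p.Prime := ⟨hp⟩
  have : Fact q.Prime := ⟨hq⟩
  obtain ⟨a, ha⟩ := exists_prime_orderOf_dvd_card' p hpG
  obtain ⟨b, hb⟩ := exists_prime_orderOf_dvd_card' q hqG
  have hap : (orderOf a).Prime := ha ▸ hp
  have hbq : (orderOf b).Prime := hb ▸ hq
  have : Nonempty ({1}ᶜ : Set G) := ⟨⟨a, ne_one hap⟩⟩
  suffices hub : ∀ u, ((enhancedPowerGraph G).induce {1}ᶜ).Reachable u ⟨a, ne_one hap⟩ from
    .mk fun u v => (hub u).trans (hub v).symm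
  rintro ⟨u, hu⟩
  obtain ⟨r, hr, hru⟩ := Nat.exists_prime_and_dvd fun h => hu (orderOf_eq_one_iff.1 h)
  have hu' : orderOf (u ^ (orderOf u / r)) = r := orderOf_pow_orderOf_div (orderOf_pos u).ne' hru
  have hu'r : (orderOf (u ^ (orderOf u / r))).Prime := by rwa [hu']
  refine (reachable_induce_of_mem_zpowers (y := ⟨_, ne_one hu'r⟩) (mem_zpowers u)
    (npow_mem_zpowers u _)).trans ?_
  by_cases hrp : r = p
  · exact (reach_of_ne hu'r hbq (by rw [hu', hb, hrp]; exact hpq)).trans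
      (reach_of_ne hbq hap (by rw [ha, hb]; exact hpq.symm))
  · exact reach_of_ne hu'r hap (by rw [hu', ha]; exact hrp)

end enhancedPowerGraph

theorem stmt_5 {G : Type*} [CommGroup G] [Finite G] (hnc : ¬ IsCyclic G) :
    vertexConnectivity (enhancedPowerGraph G) = 1 ↔
      ∃ p : ℕ, p.Prime ∧ IsPGroup p G := by
  rw [vertexConnectivity_eq_one_iff_of_isDominating (enhancedPowerGraph.isDominating_one G)]
  constructor
  · intro hdis
    have : Nontrivial G := not_subsingleton_iff_nontrivial.1 fun _ => hnc inferInstance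
    obtain ⟨p, hp, hpG⟩ := Nat.exists_prime_and_dvd (Finite.one_lt_card (α := G)).ne'
    refine ⟨p, hp, IsPGroup.of_card (Nat.eq_prime_pow_of_unique_prime_dvd Nat.card_pos.ne' ?_)⟩
    intro q hq hqG
    by_contra hqp
    exact hdis (enhancedPowerGraph.connected_induce_compl_one_of_prime_dvd hq hp hqp hqG hpG)
  · rintro ⟨p, hp, hG⟩
    have : Fact p.Prime := ⟨hp⟩
    exact enhancedPowerGraph.not_connected_induce_compl_one_of_isPGroup hG hnc
end

section
/- Let G be a finite abelian group whose order is divisible by at least two distinct primes. Then the enhanced power graph of G with identity removed is connected, and moreover any two vertices are joined by a path of length at most 3. -/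
/-!
Two distinct commuting elements of coprime orders are adjacent, since both are powers of their
product, and every nonidentity element is adjacent or equal to its powers of prime order. Hence
`a` and `b` are at distance at most 3 as soon as their orders have distinct prime divisors
`r ≠ s`: go through their powers of orders `r` and `s`. Otherwise pick `t ∈ {p, q}` different
from some prime divisor of the order of `a`; then `t` divides neither order, and an element of
order `t` is a common neighbour of `a` and `b`.
-/

section

open SimpleGraph

variable {G : Type*}

theorem Commute.mem_zpowers_mul_of_coprime [Group G] {u v : G} (h : Commute u v)
    (huv : (orderOf u).Coprime (orderOf v)) : u ∈ Subgroup.zpowers (u * v) := by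
  obtain ⟨k, hk₁, hk₀⟩ := Nat.chineseRemainder huv 1 0
  have hu : u ^ k = u := (pow_eq_pow_iff_modEq.mpr hk₁).trans (pow_one u)
  have hv : v ^ k = 1 := (pow_eq_pow_iff_modEq.mpr hk₀).trans (pow_zero v)
  exact Subgroup.mem_zpowers_iff.mpr ⟨k, by rw [zpow_natCast, h.mul_pow, hu, hv, mul_one]⟩

namespace enhancedPowerGraph

theorem adj_of_mem_zpowers [Group G] {u v : G} (hne : u ≠ v) (hv : v ∈ Subgroup.zpowers u) :
    (enhancedPowerGraph G).Adj u v :=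
  ⟨hne, u, Subgroup.mem_zpowers u, hv⟩

theorem adj_of_coprime [Group G] {u v : G} (hne : u ≠ v) (h : Commute u v)
    (huv : (orderOf u).Coprime (orderOf v)) : (enhancedPowerGraph G).Adj u v :=
  ⟨hne, u * v, h.mem_zpowers_mul_of_coprime huv,
    h.eq ▸ h.symm.mem_zpowers_mul_of_coprime huv.symm⟩

end enhancedPowerGraph

abbrev deletedEnhancedPowerGraph (G : Type*) [Group G] :=
  (enhancedPowerGraph G).induce {g : G | g ≠ 1}

namespace deletedEnhancedPowerGraph

theorem edist_le_one_of_mem_zpowers [Group G] {a b : {g : G | g ≠ 1}}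
    (hb : (b : G) ∈ Subgroup.zpowers (a : G)) : (deletedEnhancedPowerGraph G).edist a b ≤ 1 := by
  rw [edist_le_one_iff_adj_or_eq]
  by_cases hab : a = b
  · exact .inr hab
  · exact .inl (enhancedPowerGraph.adj_of_mem_zpowers (Subtype.coe_ne_coe.mpr hab) hb)

theorem edist_le_one_of_coprime [CommGroup G] {a b : {g : G | g ≠ 1}}
    (hab : (orderOf (a : G)).Coprime (orderOf (b : G))) :
    (deletedEnhancedPowerGraph G).edist a b ≤ 1 := by
  rw [edist_le_one_iff_adj_or_eq]
  by_cases h : a = b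
  · exact .inr h
  · exact .inl (enhancedPowerGraph.adj_of_coprime (Subtype.coe_ne_coe.mpr h) (.all _ _) hab)

theorem exists_orderOf_eq_prime_edist_le_one [Group G] [Finite G] (a : {g : G | g ≠ 1})
    {r : ℕ} (hr : r.Prime) (hra : r ∣ orderOf (a : G)) :
    ∃ a' : {g : G | g ≠ 1}, orderOf (a' : G) = r ∧ (deletedEnhancedPowerGraph G).edist a a' ≤ 1 := by
  have hord : orderOf ((a : G) ^ (orderOf (a : G) / r)) = r :=
    orderOf_pow_orderOf_div (orderOf_pos (a : G)).ne' hra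
  have hne : (a : G) ^ (orderOf (a : G) / r) ≠ 1 := by
    rintro h
    exact hr.ne_one (by rw [← hord, h, orderOf_one])
  exact ⟨⟨_, hne⟩, hord, edist_le_one_of_mem_zpowers ⟨_, zpow_natCast _ _⟩⟩

theorem edist_le_three_of_prime_dvd [CommGroup G] [Finite G] {a b : {g : G | g ≠ 1}}
    {r s : ℕ} (hr : r.Prime) (hs : s.Prime) (hrs : r ≠ s)
    (hra : r ∣ orderOf (a : G)) (hsb : s ∣ orderOf (b : G)) :
    (deletedEnhancedPowerGraph G).edist a b ≤ 3 := by
  obtain ⟨a', ha'r, haa'⟩ := exists_orderOf_eq_prime_edist_le_one a hr hra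
  obtain ⟨b', hb's, hbb'⟩ := exists_orderOf_eq_prime_edist_le_one b hs hsb
  set Γ := deletedEnhancedPowerGraph G
  have ha'b' : Γ.edist a' b' ≤ 1 :=
    edist_le_one_of_coprime (by rw [ha'r, hb's]; exact (Nat.coprime_primes hr hs).mpr hrs)
  calc Γ.edist a b ≤ Γ.edist a a' + Γ.edist a' b' + Γ.edist b' b :=
        Γ.edist_triangle.trans (add_le_add_left Γ.edist_triangle _)
    _ ≤ 1 + 1 + 1 := by gcongr; rwa [edist_comm]
    _ = 3 := by norm_num

theorem edist_le_two_of_prime_not_dvd [CommGroup G] [Finite G] {a b : {g : G | g ≠ 1}}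
    {t : ℕ} (ht : t.Prime) (htG : t ∣ Nat.card G)
    (hta : ¬ t ∣ orderOf (a : G)) (htb : ¬ t ∣ orderOf (b : G)) :
    (deletedEnhancedPowerGraph G).edist a b ≤ 2 := by
  have : Fact t.Prime := ⟨ht⟩
  obtain ⟨c, hc⟩ := exists_prime_orderOf_dvd_card' t htG
  have hc1 : c ≠ 1 := by
    rintro rfl
    exact ht.ne_one (by rw [← hc, orderOf_one])
  have hac : (deletedEnhancedPowerGraph G).edist a ⟨c, hc1⟩ ≤ 1 :=
    edist_le_one_of_coprime (hc ▸ ((ht.coprime_iff_not_dvd).mpr hta).symm)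
  have hcb : (deletedEnhancedPowerGraph G).edist ⟨c, hc1⟩ b ≤ 1 :=
    edist_le_one_of_coprime (hc ▸ (ht.coprime_iff_not_dvd).mpr htb)
  calc _ ≤ _ := SimpleGraph.edist_triangle
    _ ≤ 1 + 1 := add_le_add hac hcb
    _ = 2 := by norm_num

theorem edist_le_three [CommGroup G] [Finite G] {p q : ℕ} (hp : p.Prime) (hq : q.Prime)
    (hpq : p ≠ q) (hpG : p ∣ Nat.card G) (hqG : q ∣ Nat.card G) (a b : {g : G | g ≠ 1}) :
    (deletedEnhancedPowerGraph G).edist a b ≤ 3 := by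
  have minFac_prime : ∀ x : {g : G | g ≠ 1}, (orderOf (x : G)).minFac.Prime := fun x ↦
    Nat.minFac_prime (orderOf_eq_one_iff.not.mpr x.2)
  obtain ⟨t, ht, htG, htr⟩ : ∃ t, t.Prime ∧ t ∣ Nat.card G ∧ t ≠ (orderOf (a : G)).minFac := by
    by_cases h : p = (orderOf (a : G)).minFac
    · exact ⟨q, hq, hqG, h ▸ hpq.symm⟩
    · exact ⟨p, hp, hpG, h⟩
  by_cases htb : t ∣ orderOf (b : G)
  · exact edist_le_three_of_prime_dvd (minFac_prime a) ht htr.symm (Nat.minFac_dvd _) htb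
  by_cases hta : t ∣ orderOf (a : G)
  · exact edist_le_three_of_prime_dvd ht (minFac_prime b) (fun h ↦ htb (h ▸ Nat.minFac_dvd _))
      hta (Nat.minFac_dvd _)
  · exact (edist_le_two_of_prime_not_dvd ht htG hta htb).trans (by norm_num)

end deletedEnhancedPowerGraph

end

theorem stmt_6 {G : Type*} [CommGroup G] [Finite G]
    (p q : ℕ) (hp : p.Prime) (hq : q.Prime) (hpq : p ≠ q)
    (hpG : p ∣ Nat.card G) (hqG : q ∣ Nat.card G) :
    ((enhancedPowerGraph G).induce {g : G | g ≠ 1}).Connected ∧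
      ∀ a b : {g : G // g ≠ 1},
        ∃ w : ((enhancedPowerGraph G).induce {g : G | g ≠ 1}).Walk a b,
          w.length ≤ 3 := by
  have hdist := deletedEnhancedPowerGraph.edist_le_three hp hq hpq hpG hqG
  have walk : ∀ a b : {g : G // g ≠ 1},
      ∃ w : ((enhancedPowerGraph G).induce {g : G | g ≠ 1}).Walk a b, w.length ≤ 3 := by
    intro a b
    obtain ⟨w, hw⟩ := SimpleGraph.exists_walk_of_edist_ne_top ((hdist a b).trans_lt (by decide)).ne
    exact ⟨w, by exact_mod_cast hw ▸ hdist a b⟩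
  have : Nontrivial G := Finite.one_lt_card_iff_nontrivial.mp
    (hp.one_lt.trans_le (Nat.le_of_dvd Nat.card_pos hpG))
  obtain ⟨g, hg⟩ := exists_ne (1 : G)
  have : Nonempty {g : G | g ≠ 1} := ⟨⟨g, hg⟩⟩
  exact ⟨⟨fun a b ↦ (walk a b).elim fun w _ ↦ w.reachable⟩, walk⟩
end

section
/- Let G₁ be a finite group, n ∈ ℕ with gcd(|G₁|, n) = 1, and let e be the identity of G₁. Then for every x ∈ ℤ_n, the element (e, x) is a dominating vertex of the enhanced power graph of G₁ × ℤ_n. -/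
open Subgroup

section CoprimeOrders

variable {G H : Type*} [Group G] [Group H] {g : G} {h : H}

theorem Prod.mk_one_mem_zpowers_of_coprime (hco : (orderOf g).Coprime (orderOf h)) :
    ((g, 1) : G × H) ∈ zpowers (g, h) := by
  obtain ⟨m, hm⟩ := exists_pow_eq_self_of_coprime hco.symm
  have hpow : ((g, h) : G × H) ^ (orderOf h * m) = (g, 1) := by
    ext <;> simp [pow_mul, hm]
  exact hpow ▸ pow_mem (mem_zpowers _) _

theorem Prod.one_mk_mem_zpowers_of_coprime (hco : (orderOf g).Coprime (orderOf h)) :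
    ((1, h) : G × H) ∈ zpowers (g, h) := by
  obtain ⟨m, hm⟩ := exists_pow_eq_self_of_coprime hco
  have hpow : ((g, h) : G × H) ^ (orderOf g * m) = (1, h) := by
    ext <;> simp [pow_mul, hm]
  exact hpow ▸ pow_mem (mem_zpowers _) _

theorem Subgroup.prod_zpowers_eq_zpowers_of_coprime (hco : (orderOf g).Coprime (orderOf h)) :
    (zpowers g).prod (zpowers h) = zpowers (g, h) := by
  refine le_antisymm ?_ (zpowers_le.mpr ⟨mem_zpowers g, mem_zpowers h⟩)
  rintro ⟨a, b⟩ ⟨⟨i, rfl⟩, ⟨j, rfl⟩⟩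
  have hsplit : ((g ^ i, h ^ j) : G × H) = (g, 1) ^ i * (1, h) ^ j := by simp
  rw [hsplit]
  exact mul_mem (zpow_mem (Prod.mk_one_mem_zpowers_of_coprime hco) i)
    (zpow_mem (Prod.one_mk_mem_zpowers_of_coprime hco) j)

end CoprimeOrders

theorem ZMod.mem_zpowers_ofAdd_one {n : ℕ} (t : Multiplicative (ZMod n)) :
    t ∈ zpowers (Multiplicative.ofAdd (1 : ZMod n)) := by
  obtain ⟨k, hk⟩ := ZMod.intCast_surjective t.toAdd
  exact mem_zpowers_iff.mpr ⟨k, by rw [← ofAdd_zsmul, zsmul_one, hk, ofAdd_toAdd]⟩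

theorem stmt_7_general {G₁ : Type*} [Group G₁] (n : ℕ)
    (hcop : Nat.gcd (Nat.card G₁) n = 1) (x : ZMod n) :
    IsDominating (enhancedPowerGraph (G₁ × Multiplicative (ZMod n)))
      ((1 : G₁), Multiplicative.ofAdd x) := by
  rintro ⟨g, t⟩ hne
  have hco : (orderOf g).Coprime (orderOf (Multiplicative.ofAdd (1 : ZMod n))) := by
    rw [orderOf_ofAdd_eq_addOrderOf, ZMod.addOrderOf_one]
    exact Nat.Coprime.coprime_dvd_left (orderOf_dvd_natCard g) hcop
  refine ⟨Ne.symm hne, (g, Multiplicative.ofAdd 1), ?_, ?_⟩ <;>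
    rw [← prod_zpowers_eq_zpowers_of_coprime hco]
  · exact ⟨one_mem _, ZMod.mem_zpowers_ofAdd_one _⟩
  · exact ⟨mem_zpowers g, ZMod.mem_zpowers_ofAdd_one t⟩

theorem stmt_7 {G₁ : Type*} [Group G₁] [Finite G₁] (n : ℕ) (hn : 0 < n)
    (hcop : Nat.gcd (Nat.card G₁) n = 1) (x : ZMod n) :
    IsDominating (enhancedPowerGraph (G₁ × Multiplicative (ZMod n)))
      ((1 : G₁), Multiplicative.ofAdd x) :=
  stmt_7_general n hcop x
end

section
/- Let G₁ be a finite non-cyclic abelian group with no cyclic Sylow subgroup, and let n ∈ ℕ with gcd(|G₁|, n) = 1. Then the set of dominating vertices of the enhanced power graph of G₁ × ℤ_n is exactly {(e, x) : x ∈ ℤ_n}, where e is the identity of G₁. -/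
/-!
The vertices `(1, x)` dominate: for any `(g, y)`, the orders of `⟨g⟩` and `ℤ_n` are coprime, so
`⟨g⟩ × ℤ_n` is cyclic and contains both vertices. Conversely, the first coordinate of a dominating
vertex dominates in `G₁`. Suppose `a ≠ 1` dominates in `G₁`; let `p` be a prime dividing its order
and `c ∈ ⟨a⟩` of order `p`. In an abelian `p`-group with at most `p` solutions of `x ^ p = 1`,
the equation `x ^ p ^ k = 1` has at most `p ^ k` solutions, so the exponent is the order and the
group is cyclic. As the Sylow `p`-subgroup is not cyclic, some `b` with `b ^ p = 1` lies outside
`⟨c⟩`. But a cyclic group containing `a` and `b` has at most `p` solutions of `x ^ p = 1`, and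
`⟨c⟩` already accounts for `p` of them.
-/

open Subgroup Finset

theorem isDominating_enhancedPowerGraph_iff {G : Type*} [Group G] {v : G} :
    IsDominating (enhancedPowerGraph G) v ↔ ∀ u, ∃ w, v ∈ zpowers w ∧ u ∈ zpowers w := by
  refine ⟨fun h u => ?_, fun h u hu => ⟨hu.symm, h u⟩⟩
  by_cases hu : u = v
  · exact ⟨v, mem_zpowers v, hu ▸ mem_zpowers v⟩
  · exact (h u hu).2

theorem IsDominating.fst_enhancedPowerGraph {G H : Type*} [Group G] [Group H] {v : G × H}
    (hv : IsDominating (enhancedPowerGraph (G × H)) v) :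
    IsDominating (enhancedPowerGraph G) v.1 := by
  rw [isDominating_enhancedPowerGraph_iff] at hv ⊢
  intro u
  obtain ⟨w, hvw, huw⟩ := hv (u, 1)
  have hfst := (MonoidHom.fst G H).map_zpowers w
  exact ⟨w.1, hfst ▸ mem_map_of_mem _ hvw, hfst ▸ mem_map_of_mem _ huw⟩

theorem isDominating_one_prod_of_coprime {G H : Type*} [Group G] [Group H] [IsCyclic H]
    (hcop : (Nat.card G).Coprime (Nat.card H)) (h : H) :
    IsDominating (enhancedPowerGraph (G × H)) (1, h) := by
  rw [isDominating_enhancedPowerGraph_iff]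
  rintro ⟨g, y⟩
  have : IsCyclic ((zpowers g).prod (⊤ : Subgroup H)) := by
    rw [((zpowers g).prodEquiv ⊤).isCyclic, Group.isCyclic_prod_iff, card_top]
    exact ⟨inferInstance, topEquiv.isCyclic.mpr inferInstance,
      hcop.coprime_dvd_left (card_subgroup_dvd_card _)⟩
  obtain ⟨w, hw⟩ := (Subgroup.isCyclic_iff_exists_zpowers_eq_top _).mp this
  exact ⟨w, hw ▸ ⟨one_mem _, mem_top h⟩, hw ▸ ⟨mem_zpowers g, mem_top y⟩⟩

section PowCount

variable {G : Type*} [CommGroup G] [Fintype G] [DecidableEq G]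

theorem card_pow_eq_le_card_pow_eq_one (n : ℕ) (a : G) :
    #{x : G | x ^ n = a} ≤ #{x : G | x ^ n = 1} := by
  obtain ⟨x₀, hx₀⟩ | hempty := ({x : G | x ^ n = a} : Finset G).eq_empty_or_nonempty.symm
  · rw [mem_filter] at hx₀
    refine card_le_card_of_injOn (· * x₀⁻¹) (fun x hx => ?_) (mul_left_injective _).injOn
    simp only [coe_filter, Set.mem_ofPred_eq, mem_univ, true_and] at hx ⊢
    rw [mul_pow, hx, inv_pow, hx₀.2, mul_inv_cancel]
  · simp [hempty]

theorem card_pow_mul_eq_one_le (m n : ℕ) :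
    #{x : G | x ^ (m * n) = 1} ≤ #{x : G | x ^ m = 1} * #{x : G | x ^ n = 1} := by
  refine card_le_mul_card_image_of_maps_to (f := (· ^ m)) (fun x hx => ?_) _ fun y _ => ?_
  · simpa [← pow_mul] using hx
  · refine le_trans (card_le_card fun x hx => ?_) (card_pow_eq_le_card_pow_eq_one m y)
    simp only [mem_filter, mem_univ, true_and] at hx ⊢
    exact hx.2

theorem card_pow_pow_eq_one_le (p k : ℕ) :
    #{x : G | x ^ p ^ k = 1} ≤ #{x : G | x ^ p = 1} ^ k := by
  induction k with
  | zero => simp [card_le_one]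
  | succ k ih =>
    rw [pow_succ, pow_succ]
    exact (card_pow_mul_eq_one_le _ _).trans (Nat.mul_le_mul_right _ ih)

theorem IsPGroup.isCyclic_of_card_pow_eq_one_le {p : ℕ} (hp : p.Prime) (hG : IsPGroup p G)
    (h : #{x : G | x ^ p = 1} ≤ p) : IsCyclic G := by
  have := Fact.mk hp
  obtain ⟨k, hk⟩ := IsPGroup.iff_card.mp hG
  obtain ⟨j, -, hj⟩ := (Nat.dvd_prime_pow hp).mp (hk ▸ Group.exponent_dvd_nat_card (G := G))
  refine IsCyclic.of_exponent_eq_card (le_antisymm (Nat.le_of_dvd Nat.card_pos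
    Group.exponent_dvd_nat_card) ?_)
  calc Nat.card G = #{x : G | x ^ p ^ j = 1} := by
        rw [Nat.card_eq_fintype_card, ← hj,
          filter_true_of_mem fun x _ => Monoid.pow_exponent_eq_one x, card_univ]
    _ ≤ #{x : G | x ^ p = 1} ^ j := card_pow_pow_eq_one_le p j
    _ ≤ p ^ j := Nat.pow_le_pow_left h j
    _ = Monoid.exponent G := hj.symm

end PowCount

theorem Sylow.lt_card_pow_eq_one_of_not_isCyclic {G : Type*} [CommGroup G] [Fintype G]
    [DecidableEq G] {p : ℕ} [Fact p.Prime] (P : Sylow p G) (hP : ¬ IsCyclic P) :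
    p < #{x : G | x ^ p = 1} := by
  classical
  by_contra! hle
  refine hP (P.isPGroup'.isCyclic_of_card_pow_eq_one_le Fact.out (le_trans ?_ hle))
  refine card_le_card_of_injOn Subtype.val (fun x hx => ?_) Subtype.val_injective.injOn
  simpa using congrArg Subtype.val (mem_filter.mp hx).2

theorem mem_zpowers_of_pow_eq_one {G : Type*} [Group G] [Finite G] {p : ℕ} (hp : 0 < p)
    {b c w : G} (hc : orderOf c = p) (hb : b ^ p = 1) (hcw : c ∈ zpowers w)
    (hbw : b ∈ zpowers w) : b ∈ zpowers c := by
  classical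
  have := Fintype.ofFinite G
  let c' : zpowers w := ⟨c, hcw⟩
  have hc' : orderOf c' = p := (orderOf_mk c hcw).trans hc
  have hsub :
      (zpowers c' : Set (zpowers w)).toFinset ⊆ ({x | x ^ p = 1} : Finset (zpowers w)) :=
    fun x hx => mem_filter.mpr ⟨mem_univ _, orderOf_dvd_iff_pow_eq_one.mp
      (hc' ▸ orderOf_dvd_of_mem_zpowers (Set.mem_toFinset.mp hx))⟩
  have hcard : #{x : zpowers w | x ^ p = 1} ≤ #(zpowers c' : Set (zpowers w)).toFinset := by
    rw [Set.toFinset_card, ← Nat.card_eq_fintype_card, SetLike.coe_sort_coe, Nat.card_zpowers,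
      hc']
    exact IsCyclic.card_pow_eq_one_le hp
  have hb' : (⟨b, hbw⟩ : zpowers w) ∈ zpowers c' := by
    rw [← SetLike.mem_coe, ← Set.mem_toFinset, eq_of_subset_of_card_le hsub hcard]
    exact mem_filter.mpr ⟨mem_univ _, Subtype.ext hb⟩
  obtain ⟨k, hk⟩ := mem_zpowers_iff.mp hb'
  exact ⟨k, congrArg Subtype.val hk⟩

theorem eq_one_of_isDominating_enhancedPowerGraph {G : Type*} [CommGroup G] [Finite G]
    (hsyl : ∀ p : ℕ, p.Prime → p ∣ Nat.card G → ∀ P : Sylow p G, ¬ IsCyclic (P : Subgroup G))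
    {a : G} (ha : IsDominating (enhancedPowerGraph G) a) : a = 1 := by
  classical
  have := Fintype.ofFinite G
  by_contra ha1
  set p := (orderOf a).minFac
  have hp : p.Prime := Nat.minFac_prime (mt orderOf_eq_one_iff.mp ha1)
  have hpa : p ∣ orderOf a := Nat.minFac_dvd _
  have := Fact.mk hp
  have hc : orderOf (a ^ (orderOf a / p)) = p :=
    orderOf_pow_orderOf_div (orderOf_pos a).ne' hpa
  obtain ⟨b, hb, hbc⟩ : ∃ b : G, b ^ p = 1 ∧ b ∉ zpowers (a ^ (orderOf a / p)) := by
    by_contra! hall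
    have hle : #{x : G | x ^ p = 1} ≤ #(zpowers (a ^ (orderOf a / p)) : Set G).toFinset :=
      card_le_card fun x hx => Set.mem_toFinset.mpr (hall x (mem_filter.mp hx).2)
    rw [Set.toFinset_card, ← Nat.card_eq_fintype_card, SetLike.coe_sort_coe, Nat.card_zpowers,
      hc] at hle
    let P : Sylow p G := default
    exact hle.not_gt (P.lt_card_pow_eq_one_of_not_isCyclic
      (hsyl p hp (hpa.trans (orderOf_dvd_natCard a)) P))
  obtain ⟨w, haw, hbw⟩ := isDominating_enhancedPowerGraph_iff.mp ha b
  exact hbc (mem_zpowers_of_pow_eq_one hp.pos hc hb (pow_mem haw _) hbw)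

theorem stmt_8_general {G₁ : Type*} [CommGroup G₁] [Finite G₁]
    (hsyl : ∀ p : ℕ, p.Prime → p ∣ Nat.card G₁ →
      ∀ P : Sylow p G₁, ¬ IsCyclic (P : Subgroup G₁))
    (n : ℕ) (hcop : Nat.gcd (Nat.card G₁) n = 1) :
    {v : G₁ × Multiplicative (ZMod n) |
        IsDominating (enhancedPowerGraph (G₁ × Multiplicative (ZMod n))) v} =
      Set.range (fun x : ZMod n => ((1 : G₁), Multiplicative.ofAdd x)) := by
  ext v
  constructor
  · intro hv
    have hv₁ : v.1 = 1 := eq_one_of_isDominating_enhancedPowerGraph hsyl hv.fst_enhancedPowerGraph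
    exact ⟨v.2.toAdd, Prod.ext hv₁.symm rfl⟩
  · rintro ⟨x, rfl⟩
    have hcard : Nat.card (Multiplicative (ZMod n)) = n := Nat.card_zmod n
    exact isDominating_one_prod_of_coprime (by rwa [hcard]) _

theorem stmt_8 {G₁ : Type*} [CommGroup G₁] [Finite G₁] (hnc : ¬ IsCyclic G₁)
    (hsyl : ∀ p : ℕ, p.Prime → p ∣ Nat.card G₁ →
      ∀ P : Sylow p G₁, ¬ IsCyclic (P : Subgroup G₁))
    (n : ℕ) (hn : 0 < n) (hcop : Nat.gcd (Nat.card G₁) n = 1) :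
    {v : G₁ × Multiplicative (ZMod n) |
        IsDominating (enhancedPowerGraph (G₁ × Multiplicative (ZMod n))) v} =
      Set.range (fun x : ZMod n => ((1 : G₁), Multiplicative.ofAdd x)) :=
  stmt_8_general hsyl n hcop
end

section
/- Let G be a finite non-cyclic abelian group with invariant factor decomposition involving distinct primes p₁,...,p_r, where for each prime p_i the exponents of its cyclic factors are t_{i1} ≤ t_{i2} ≤ ... ≤ t_{ik_i}. Let m = p₁^{t_{11}} p₂^{t_{21}} ⋯ p_r^{t_{r1}}. Then the vertex connectivity of the enhanced power graph of G is at most m − φ(m), where φ is Euler's totient function. -/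
/-!
If `⟨x⟩` is a maximal cyclic subgroup of `G`, every cyclic subgroup containing a generator `u` of
`⟨x⟩` is `⟨x⟩` itself, so all neighbours of `u` in the enhanced power graph lie in `⟨x⟩`. Removing
the `|x| - φ(|x|)` non-generators of `⟨x⟩` therefore separates its generators from the (nonempty,
since `G` is not cyclic) complement of `⟨x⟩`. In `∏ᵢ ∏ⱼ ℤ/pᵢ^tᵢⱼ` the element with a `1` in the
first factor of every prime and `0` elsewhere has order `m` and generates a maximal cyclic
subgroup: a root `w` of it satisfies `wⁿ = x` with `n` prime to every `pᵢ`, which forces `w` to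
vanish outside the first factors, so `w` also has order `m`.
-/

open Subgroup

section EnhancedPowerGraph

variable {G : Type*} [Group G]

lemma ncard_setOf_mem_zpowers_orderOf_ne [Finite G] (x : G) :
    {u | u ∈ zpowers x ∧ orderOf u ≠ orderOf x}.ncard = orderOf x - (orderOf x).totient := by
  classical
  have : Fintype G := Fintype.ofFinite G
  have himage : {u | u ∈ zpowers x ∧ orderOf u ≠ orderOf x} =
      Subtype.val '' {z : zpowers x | orderOf z ≠ orderOf x} := by
    ext u
    constructor
    · rintro ⟨hu, hord⟩
      exact ⟨⟨u, hu⟩, by rwa [Set.mem_ofPred_eq, orderOf_mk], rfl⟩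
    · rintro ⟨z, hz, rfl⟩
      exact ⟨z.2, by rwa [orderOf_coe]⟩
  have hcard : Fintype.card (zpowers x) = orderOf x := by
    rw [← Nat.card_eq_fintype_card, Nat.card_zpowers]
  rw [himage, Set.ncard_image_of_injective _ Subtype.val_injective, ← Nat.card_coe_set_eq,
    Set.coe_ofPred, Nat.card_eq_fintype_card, Fintype.card_subtype_compl, hcard,
    Fintype.card_subtype, IsCyclic.card_orderOf_eq_totient (hcard ▸ dvd_rfl)]

lemma zpowers_eq_of_mem_of_orderOf_le [Finite G] {x w : G} (hxw : x ∈ zpowers w)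
    (hord : orderOf w ≤ orderOf x) : zpowers w = zpowers x :=
  (eq_of_le_of_card_ge (zpowers_le.mpr hxw) (by rwa [Nat.card_zpowers, Nat.card_zpowers])).symm

lemma mem_zpowers_of_enhancedPowerGraph_adj {x u v : G}
    (hx : ∀ w, x ∈ zpowers w → zpowers w = zpowers x) (hu : zpowers u = zpowers x)
    (huv : (enhancedPowerGraph G).Adj u v) : v ∈ zpowers x := by
  obtain ⟨-, w, huw, hvw⟩ := huv
  have hxw : x ∈ zpowers w := zpowers_le.mp (hu ▸ zpowers_le.mpr huw)
  rwa [← hx w hxw]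

lemma not_connected_induce_compl_setOf_mem_zpowers [Finite G] {x y : G}
    (hx : ∀ w, x ∈ zpowers w → zpowers w = zpowers x) (hy : y ∉ zpowers x) :
    ¬ ((enhancedPowerGraph G).induce
      {u | u ∈ zpowers x ∧ orderOf u ≠ orderOf x}ᶜ).Connected := by
  set S := {u | u ∈ zpowers x ∧ orderOf u ≠ orderOf x}
  -- a walk avoiding `S` that starts at a generator of `⟨x⟩` only visits generators of `⟨x⟩`
  have hgen : ∀ a b : ↥Sᶜ, ((enhancedPowerGraph G).induce Sᶜ).Walk a b →
      orderOf (a : G) = orderOf x → (a : G) ∈ zpowers x → (b : G) ∈ zpowers x := by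
    intro a b walk
    induction walk with
    | nil => exact fun _ ha => ha
    | @cons a c b hac _ ih =>
      intro hord ha
      have hc : (c : G) ∈ zpowers x := mem_zpowers_of_enhancedPowerGraph_adj hx
        (zpowers_eq_of_mem_of_orderOf_le ha hord.ge).symm hac
      exact ih (not_and_not_right.mp c.2 hc) hc
  intro hconn
  have hxS : x ∈ Sᶜ := fun h => h.2 rfl
  have hyS : y ∈ Sᶜ := fun h => hy h.1
  obtain ⟨walk⟩ := hconn.preconnected ⟨x, hxS⟩ ⟨y, hyS⟩
  exact hy (hgen _ _ walk rfl (mem_zpowers x))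

theorem vertexConnectivity_enhancedPowerGraph_le [Finite G] (hnc : ¬ IsCyclic G) {x : G}
    (hx : ∀ (w : G) (n : ℕ), w ^ n = x → orderOf w ≤ orderOf x) :
    vertexConnectivity (enhancedPowerGraph G) ≤ orderOf x - (orderOf x).totient := by
  obtain ⟨y, hy⟩ : ∃ y, y ∉ zpowers x := by
    by_contra! h
    exact hnc ⟨x, h⟩
  have hmax : ∀ w, x ∈ zpowers w → zpowers w = zpowers x := fun w hxw => by
    obtain ⟨n, hn⟩ := mem_powers_iff_mem_zpowers.mpr hxw
    exact zpowers_eq_of_mem_of_orderOf_le hxw (hx w n hn)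
  exact Nat.sInf_le ⟨_, ncard_setOf_mem_zpowers_orderOf_ne x,
    not_connected_induce_compl_setOf_mem_zpowers hmax hy⟩

end EnhancedPowerGraph

lemma orderOf_coprime_of_orderOf_pow_eq {M : Type*} [Monoid M] {a : M} {n : ℕ}
    (h₀ : orderOf a ≠ 0) (h : orderOf (a ^ n) = orderOf a) : (orderOf a).Coprime n := by
  rw [(orderOf_ne_zero_iff.mp h₀).orderOf_pow, Nat.div_eq_self] at h
  exact h.resolve_left h₀

lemma orderOf_multiplicative_zmod_dvd {n : ℕ} (a : Multiplicative (ZMod n)) : orderOf a ∣ n :=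
  orderOf_dvd_of_pow_eq_one <| Multiplicative.toAdd.injective <| by
    rw [toAdd_pow, nsmul_eq_mul, ZMod.natCast_self, zero_mul, toAdd_one]

lemma orderOf_ofAdd_one_zmod (n : ℕ) : orderOf (Multiplicative.ofAdd (1 : ZMod n)) = n := by
  rw [orderOf_ofAdd_eq_addOrderOf, ZMod.addOrderOf_one]

/-- The exponent `n` is prime to `p`, so it kills no element of the `j₀`-th factor and every
element of the other factors. -/
lemma orderOf_eq_of_pow_eq_mulSingle_ofAdd_one {ι : Type*} [DecidableEq ι] {p : ℕ}
    (hp : p.Prime) {t : ι → ℕ} {j₀ : ι} (ht : t j₀ ≠ 0)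
    {w : (j : ι) → Multiplicative (ZMod (p ^ t j))} {n : ℕ}
    (hw : w ^ n = Pi.mulSingle j₀ (Multiplicative.ofAdd 1)) : orderOf w = p ^ t j₀ := by
  have hpow : orderOf (w j₀ ^ n) = p ^ t j₀ := by
    rw [← Pi.pow_apply, hw, Pi.mulSingle_eq_same, orderOf_ofAdd_one_zmod]
  have hord : orderOf (w j₀) = p ^ t j₀ :=
    (orderOf_multiplicative_zmod_dvd _).antisymm ((dvd_of_eq hpow.symm).trans (orderOf_pow_dvd n))
  have hcop : p.Coprime n := by
    refine Nat.Coprime.coprime_dvd_left (dvd_pow_self p ht) ?_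
    rw [← hord]
    exact orderOf_coprime_of_orderOf_pow_eq (hord.trans_ne (pow_ne_zero _ hp.ne_zero))
      (hpow.trans hord.symm)
  have hw_single : w = Pi.mulSingle j₀ (w j₀) := by
    funext j
    obtain rfl | hj := eq_or_ne j j₀
    · rw [Pi.mulSingle_eq_same]
    · rw [Pi.mulSingle_eq_of_ne hj, ← orderOf_eq_one_iff]
      refine Nat.Coprime.eq_one_of_dvd ?_ (orderOf_dvd_of_pow_eq_one (n := n) ?_)
      · exact (hcop.pow_left (t j)).coprime_dvd_left (orderOf_multiplicative_zmod_dvd _)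
      · rw [← Pi.pow_apply, hw, Pi.mulSingle_eq_of_ne hj]
  rw [hw_single, orderOf_piMulSingle, hord]

section Generator

variable {ι : Type*} {κ : ι → Type*} [∀ i, DecidableEq (κ i)]

def generatorAt (p : ι → ℕ) (t : (i : ι) → κ i → ℕ) (j₀ : (i : ι) → κ i) :
    (i : ι) → (j : κ i) → Multiplicative (ZMod (p i ^ t i j)) :=
  fun i => Pi.mulSingle (j₀ i) (Multiplicative.ofAdd 1)

variable {p : ι → ℕ} {t : (i : ι) → κ i → ℕ} {j₀ : (i : ι) → κ i}

lemma orderOf_generatorAt_apply (i : ι) : orderOf (generatorAt p t j₀ i) = p i ^ t i (j₀ i) := by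
  rw [generatorAt, orderOf_piMulSingle, orderOf_ofAdd_one_zmod]

lemma orderOf_generatorAt [Fintype ι] (hp : ∀ i, (p i).Prime) (hpinj : Function.Injective p) :
    orderOf (generatorAt p t j₀) = ∏ i, p i ^ t i (j₀ i) := by
  simp only [Pi.orderOf, orderOf_generatorAt_apply]
  refine Finset.lcm_eq_prod fun i _ i' _ hii' => ?_
  exact Nat.Coprime.pow _ _ ((Nat.coprime_primes (hp i) (hp i')).mpr (hpinj.ne hii'))

lemma orderOf_eq_of_pow_eq_generatorAt (hp : ∀ i, (p i).Prime) (ht : ∀ i, t i (j₀ i) ≠ 0)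
    {w : (i : ι) → (j : κ i) → Multiplicative (ZMod (p i ^ t i j))} {n : ℕ}
    (hw : w ^ n = generatorAt p t j₀) : orderOf w = orderOf (generatorAt p t j₀) := by
  have hcoord (i : ι) : orderOf (w i) = orderOf (generatorAt p t j₀ i) := by
    rw [orderOf_generatorAt_apply]
    exact orderOf_eq_of_pow_eq_mulSingle_ofAdd_one (hp i) (ht i) (by rw [← Pi.pow_apply, hw]; rfl)
  rw [Pi.orderOf_eq_sInf, Pi.orderOf_eq_sInf]
  simp only [hcoord]

end Generator

theorem stmt_10_general {G : Type*} [CommGroup G] [Finite G] (hnc : ¬ IsCyclic G)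
    (r : ℕ) (p : Fin r → ℕ) (hp : ∀ i, (p i).Prime) (hpinj : Function.Injective p)
    (k : Fin r → ℕ) (hk : ∀ i, 1 ≤ k i)
    (t : (i : Fin r) → Fin (k i) → ℕ)
    (ht1 : ∀ i j, 1 ≤ t i j)
    (hiso : Nonempty
      (G ≃* ((i : Fin r) → (j : Fin (k i)) → Multiplicative (ZMod (p i ^ t i j))))) :
    vertexConnectivity (enhancedPowerGraph G) ≤
      (∏ i : Fin r, p i ^ t i ⟨0, hk i⟩) -
        Nat.totient (∏ i : Fin r, p i ^ t i ⟨0, hk i⟩) := by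
  obtain ⟨e⟩ := hiso
  set X := generatorAt p t fun i => ⟨0, hk i⟩
  have hroots (w : G) (n : ℕ) (hw : w ^ n = e.symm X) : orderOf w ≤ orderOf (e.symm X) := by
    have hew : e w ^ n = X := by rw [← map_pow, hw, e.apply_symm_apply]
    rw [← e.orderOf_eq w, e.symm.orderOf_eq]
    have ht (i : Fin r) : t i ⟨0, hk i⟩ ≠ 0 := Nat.one_le_iff_ne_zero.mp (ht1 i _)
    exact (orderOf_eq_of_pow_eq_generatorAt hp ht hew).le
  simpa only [e.symm.orderOf_eq, X, orderOf_generatorAt hp hpinj] using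
    vertexConnectivity_enhancedPowerGraph_le hnc hroots

theorem stmt_10 {G : Type*} [CommGroup G] [Finite G] (hnc : ¬ IsCyclic G)
    (r : ℕ) (p : Fin r → ℕ) (hp : ∀ i, (p i).Prime) (hpinj : Function.Injective p)
    (k : Fin r → ℕ) (hk : ∀ i, 1 ≤ k i)
    (t : (i : Fin r) → Fin (k i) → ℕ)
    (ht1 : ∀ i j, 1 ≤ t i j) (htmono : ∀ i, Monotone (t i))
    (hiso : Nonempty
      (G ≃* ((i : Fin r) → (j : Fin (k i)) → Multiplicative (ZMod (p i ^ t i j))))) :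
    vertexConnectivity (enhancedPowerGraph G) ≤
      (∏ i : Fin r, p i ^ t i ⟨0, hk i⟩) -
        Nat.totient (∏ i : Fin r, p i ^ t i ⟨0, hk i⟩) :=
  stmt_10_general hnc r p hp hpinj k hk t ht1 hiso
end

section
/- Let G = ℤ_{p^{t₁}} × ⋯ × ℤ_{p^{t_r}} × ℤ_n with r ≥ 2 and gcd(p, n) = 1. Then the number of connected components of the proper enhanced power graph G_e^{**}(G) equals (p^r − 1)/(p − 1). -/
/-!
Write `P = ∏ ℤ_{p^{tᵢ}}`. As `n` is prime to `p`, two elements of `P × ℤ_n` are powers of a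
common element iff their `P`-components are. A nontrivial `a ∈ P` generates a cyclic `p`-group,
whose unique subgroup of order `p` is also that of every `w` with `a ∈ ⟨w⟩`; so this subgroup is
constant along edges, and every vertex is joined to a generator of it. Hence the components of
the graph on `{v | v.1 ≠ 1}` correspond to the subgroups of order `p` of `P`. There are `p^r`
solutions of `a^p = 1` in `P`, hence `p^r - 1` elements of order `p`, and `p - 1` of them in each
subgroup of order `p`: so there are `(p^r - 1)/(p - 1) ≥ 2` such subgroups (as `r ≥ 2`), and the
latter inequality is what makes `{v | v.1 ≠ 1}` exactly the set of non-dominating vertices.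
-/

open Subgroup

section Group

variable {G : Type*} [Group G]

theorem zpowers_eq_zpowers_pow_orderOf_div {w x : G} (hw : IsOfFinOrder w)
    (hx : x ∈ zpowers w) : zpowers x = zpowers (w ^ (orderOf w / orderOf x)) := by
  have hdvd : orderOf x ∣ orderOf w := orderOf_dvd_of_mem_zpowers hx
  have hord : orderOf (w ^ (orderOf w / orderOf x)) = orderOf x :=
    orderOf_pow_orderOf_div hw.orderOf_pos.ne' hdvd
  have hmem : x ∈ zpowers (w ^ (orderOf w / orderOf x)) := by
    obtain ⟨k, hk⟩ := hw.mem_powers_iff_mem_zpowers.mpr hx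
    replace hk : w ^ k = x := hk
    have hkm : orderOf w / orderOf x * orderOf x ∣ k * orderOf x := by
      rw [Nat.div_mul_cancel hdvd, orderOf_dvd_iff_pow_eq_one, pow_mul, hk, pow_orderOf_eq_one]
    obtain ⟨j, rfl⟩ := Nat.dvd_of_mul_dvd_mul_right (hw.of_mem_zpowers hx).orderOf_pos hkm
    exact mem_zpowers_iff.mpr ⟨j, by rw [zpow_natCast, ← pow_mul, hk]⟩
  have : Finite (zpowers (w ^ (orderOf w / orderOf x))) := hw.pow.finite_zpowers.to_subtype
  exact eq_of_le_of_card_ge (zpowers_le.mpr hmem)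
    (by rw [Nat.card_zpowers, Nat.card_zpowers, hord])

/-- For `d ∣ orderOf a ≠ 0`, the unique subgroup of order `d` of the cyclic group `zpowers a`. -/
noncomputable def cyclicSubgroupOfOrder (d : ℕ) (a : G) : Subgroup G :=
  zpowers (a ^ (orderOf a / d))

theorem cyclicSubgroupOfOrder_le_zpowers (d : ℕ) (a : G) :
    cyclicSubgroupOfOrder d a ≤ zpowers a :=
  zpowers_le.mpr (npow_mem_zpowers a _)

theorem card_cyclicSubgroupOfOrder {d : ℕ} {a : G} (ha : IsOfFinOrder a) (hd : d ∣ orderOf a) :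
    Nat.card (cyclicSubgroupOfOrder d a) = d := by
  rw [cyclicSubgroupOfOrder, Nat.card_zpowers, orderOf_pow_orderOf_div ha.orderOf_pos.ne' hd]

theorem cyclicSubgroupOfOrder_eq_zpowers {d : ℕ} {a : G} (ha : orderOf a = d) (hd : 0 < d) :
    cyclicSubgroupOfOrder d a = zpowers a := by
  rw [cyclicSubgroupOfOrder, ha, Nat.div_self hd, pow_one]

theorem cyclicSubgroupOfOrder_eq_of_mem_zpowers {d : ℕ} {a w : G} (hw : IsOfFinOrder w)
    (ha : a ∈ zpowers w) (hd : d ∣ orderOf a) :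
    cyclicSubgroupOfOrder d a = cyclicSubgroupOfOrder d w := by
  have hord : orderOf (a ^ (orderOf a / d)) = d :=
    orderOf_pow_orderOf_div (hw.of_mem_zpowers ha).orderOf_pos.ne' hd
  rw [cyclicSubgroupOfOrder, zpowers_eq_zpowers_pow_orderOf_div hw
    (zpowers_le.mpr ha (npow_mem_zpowers a _)), hord, cyclicSubgroupOfOrder]

theorem zpowers_eq_of_mem_of_card_eq_prime {p : ℕ} [Fact p.Prime] {H : Subgroup G}
    (hH : Nat.card H = p) {g : G} (hg : g ∈ H) (hg1 : g ≠ 1) : zpowers g = H := by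
  have htop := zpowers_eq_top_of_prime_card hH (g := ⟨g, hg⟩) (by simpa using hg1)
  simpa [MonoidHom.map_zpowers, ← MonoidHom.range_eq_map] using congrArg (map H.subtype) htop

theorem exists_zpowers_eq_of_card_eq_prime {p : ℕ} [hp : Fact p.Prime] {H : Subgroup G}
    (hH : Nat.card H = p) : ∃ g, zpowers g = H := by
  have hbot : H ≠ ⊥ := by rw [Ne, eq_bot_iff_card, hH]; exact hp.out.ne_one
  obtain ⟨g, hg1⟩ := ne_bot_iff_exists_ne_one.mp hbot
  exact ⟨g, zpowers_eq_of_mem_of_card_eq_prime hH g.2 (by simpa using hg1)⟩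

theorem card_pow_prime_eq_one [Finite G] {p : ℕ} (hp : p.Prime) :
    Nat.card {g : G // g ^ p = 1} = Nat.card {g : G // orderOf g = p} + 1 := by
  have hset : {g : G | g ^ p = 1} = insert 1 {g | orderOf g = p} := by
    ext g
    rw [Set.mem_ofPred_eq, ← orderOf_dvd_iff_pow_eq_one, Nat.dvd_prime hp, orderOf_eq_one_iff]
    rfl
  have hone : (1 : G) ∉ {g | orderOf g = p} := by simpa using hp.ne_one.symm
  change Nat.card {g : G | g ^ p = 1} = Nat.card {g : G | orderOf g = p} + 1
  rw [Nat.card_coe_set_eq, Nat.card_coe_set_eq, hset, Set.ncard_insert_of_notMem hone]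

theorem card_mem_and_ne_one [Finite G] (H : Subgroup G) :
    Nat.card {g : G // g ∈ H ∧ g ≠ 1} = Nat.card H - 1 :=
  Set.ncard_sdiff_singleton_of_mem (s := (H : Set G)) H.one_mem

theorem card_orderOf_eq_prime [Finite G] {p : ℕ} [hp : Fact p.Prime] :
    Nat.card {g : G // orderOf g = p} =
      Nat.card {H : Subgroup G // Nat.card H = p} * (p - 1) := by
  let f : {g : G // orderOf g = p} → {H : Subgroup G // Nat.card H = p} :=
    fun g => ⟨zpowers g, by rw [Nat.card_zpowers, g.2]⟩
  have hfiber (H : {H : Subgroup G // Nat.card H = p}) :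
      {g // f g = H} ≃ {g : G // g ∈ (H : Subgroup G) ∧ g ≠ 1} :=
    { toFun := fun g => ⟨g.1, congrArg Subtype.val g.2 ▸ mem_zpowers g.1.1,
        (orderOf_eq_prime_iff.mp g.1.2).2⟩
      invFun := fun g => ⟨⟨g, by
          rw [← Nat.card_zpowers, zpowers_eq_of_mem_of_card_eq_prime H.2 g.2.1 g.2.2, H.2]⟩,
        Subtype.ext (zpowers_eq_of_mem_of_card_eq_prime H.2 g.2.1 g.2.2)⟩
      left_inv := fun _ => rfl
      right_inv := fun _ => rfl }
  have : Fintype {H : Subgroup G // Nat.card H = p} := Fintype.ofFinite _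
  calc Nat.card {g : G // orderOf g = p}
      = ∑ H, Nat.card {g // f g = H} := by
        rw [Nat.card_congr (Equiv.sigmaFiberEquiv f).symm, Nat.card_sigma]
    _ = ∑ _H : {H : Subgroup G // Nat.card H = p}, (p - 1) :=
        Finset.sum_congr rfl fun H _ => by rw [Nat.card_congr (hfiber H), card_mem_and_ne_one, H.2]
    _ = _ := by rw [Finset.sum_const, Finset.card_univ, smul_eq_mul, Nat.card_eq_fintype_card]

end Group

theorem Pi.card_pow_eq_one {ι : Type*} [Fintype ι] {M : ι → Type*} [∀ i, Monoid (M i)] (d : ℕ) :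
    Nat.card {a : (i : ι) → M i // a ^ d = 1} = ∏ i, Nat.card {x : M i // x ^ d = 1} := by
  rw [← Nat.card_pi]
  exact Nat.card_congr ((Equiv.subtypeEquivRight fun a => funext_iff).trans
    (Equiv.subtypePiEquivPi (p := fun _ x => x ^ d = 1)))

theorem Nat.card_multiplicative (α : Type*) : Nat.card (Multiplicative α) = Nat.card α :=
  Nat.card_congr Multiplicative.toAdd

theorem card_pow_prime_eq_one_zmod {p : ℕ} (hp : p.Prime) {k : ℕ} (hk : 1 ≤ k) :
    Nat.card {x : Multiplicative (ZMod (p ^ k)) // x ^ p = 1} = p := by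
  have : NeZero (p ^ k) := ⟨pow_ne_zero k hp.ne_zero⟩
  have h := IsCyclic.card_powMonoidHom_ker (Multiplicative (ZMod (p ^ k))) p
  rwa [Nat.card_multiplicative, Nat.card_zmod, Nat.gcd_eq_right (dvd_pow_self p (by omega))] at h

theorem isPGroup_pi_zmod {ι : Type*} [Fintype ι] {p : ℕ} (t : ι → ℕ) :
    IsPGroup p ((i : ι) → Multiplicative (ZMod (p ^ t i))) := by
  refine IsPGroup.of_card (n := ∑ i, t i) ?_
  simp only [Nat.card_pi, Nat.card_multiplicative, Nat.card_zmod,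
    Finset.prod_pow_eq_pow_sum]

theorem card_subgroups_of_prime_card_mul_pi_zmod {ι : Type*} [Fintype ι] {p : ℕ}
    [hp : Fact p.Prime] (t : ι → ℕ) (ht : ∀ i, 1 ≤ t i) :
    Nat.card {H : Subgroup ((i : ι) → Multiplicative (ZMod (p ^ t i))) // Nat.card H = p} *
      (p - 1) = p ^ Fintype.card ι - 1 := by
  have : ∀ i, NeZero (p ^ t i) := fun i => ⟨pow_ne_zero _ hp.out.ne_zero⟩
  have h := card_pow_prime_eq_one (G := (i : ι) → Multiplicative (ZMod (p ^ t i))) hp.out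
  rw [Pi.card_pow_eq_one,
    Finset.prod_congr rfl fun i _ => card_pow_prime_eq_one_zmod hp.out (ht i), Finset.prod_const,
    Finset.card_univ, card_orderOf_eq_prime] at h
  omega

theorem mem_zpowers_prod_of_coprime {P C : Type*} [Group P] [Group C] {a : P} {c : C}
    (h : (orderOf a).Coprime (orderOf c)) {x : P} {y : C} (hx : x ∈ zpowers a)
    (hy : y ∈ zpowers c) : (x, y) ∈ zpowers (a, c) := by
  obtain ⟨i, rfl⟩ := mem_zpowers_iff.mp hx
  obtain ⟨j, rfl⟩ := mem_zpowers_iff.mp hy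
  obtain ⟨u, v, huv⟩ := Nat.isCoprime_iff_coprime.mpr h
  -- By Bezout, this exponent is `≡ i` modulo `orderOf a` and `≡ j` modulo `orderOf c`.
  refine mem_zpowers_iff.mpr ⟨i * (v * orderOf c) + j * (u * orderOf a), Prod.ext ?_ ?_⟩
  · rw [Prod.pow_fst, zpow_eq_zpow_iff_modEq, Int.modEq_iff_dvd]
    exact ⟨(i - j) * u, by linear_combination (-i) * huv⟩
  · rw [Prod.pow_snd, zpow_eq_zpow_iff_modEq, Int.modEq_iff_dvd]
    exact ⟨(j - i) * v, by linear_combination (-j) * huv⟩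

theorem SimpleGraph.card_connectedComponent_eq_of_surjective {V β : Type*} {Γ : SimpleGraph V}
    (f : V → β) (hadj : ∀ u v, Γ.Adj u v → f u = f v)
    (hreach : ∀ u v, f u = f v → Γ.Reachable u v) (hsurj : Function.Surjective f) :
    Nat.card Γ.ConnectedComponent = Nat.card β := by
  have hwalk {u v : V} (w : Γ.Walk u v) : f u = f v := by
    induction w with
    | nil => rfl
    | cons h _ ih => exact (hadj _ _ h).trans ih
  refine Nat.card_congr (Equiv.ofBijective (ConnectedComponent.lift f fun _ _ w _ => hwalk w)
    ⟨fun c d => ?_, fun b => ?_⟩)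
  · induction c, d using ConnectedComponent.ind₂ with
    | h u v => exact fun h => ConnectedComponent.sound (hreach u v h)
  · obtain ⟨v, rfl⟩ := hsurj b
    exact ⟨Γ.connectedComponentMk v, rfl⟩

section Product

variable {P C : Type*} [Group P] [Group C]

theorem enhancedPowerGraph_prod_adj_iff [IsCyclic C]
    (hcop : ∀ a : P, (orderOf a).Coprime (Nat.card C)) {u v : P × C} :
    (enhancedPowerGraph (P × C)).Adj u v ↔
      u ≠ v ∧ ∃ w : P, u.1 ∈ zpowers w ∧ v.1 ∈ zpowers w := by
  refine ⟨fun ⟨hne, w, hu, hv⟩ => ⟨hne, w.1, ?_, ?_⟩, fun ⟨hne, w, hu, hv⟩ => ?_⟩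
  · obtain ⟨k, rfl⟩ := mem_zpowers_iff.mp hu
    exact mem_zpowers_iff.mpr ⟨k, rfl⟩
  · obtain ⟨k, rfl⟩ := mem_zpowers_iff.mp hv
    exact mem_zpowers_iff.mpr ⟨k, rfl⟩
  · obtain ⟨c, hc⟩ := IsCyclic.exists_generator (α := C)
    have hwc : (orderOf w).Coprime (orderOf c) :=
      orderOf_eq_card_of_forall_mem_zpowers hc ▸ hcop w
    exact ⟨hne, (w, c), mem_zpowers_prod_of_coprime hwc hu (hc _),
      mem_zpowers_prod_of_coprime hwc hv (hc _)⟩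

theorem reachable_induce_fst_ne_one_of_mem_zpowers [IsCyclic C]
    (hcop : ∀ a : P, (orderOf a).Coprime (Nat.card C)) {u v : {v : P × C | v.1 ≠ 1}} {w : P}
    (hu : u.1.1 ∈ zpowers w) (hv : v.1.1 ∈ zpowers w) :
    ((enhancedPowerGraph (P × C)).induce {v | v.1 ≠ 1}).Reachable u v := by
  by_cases huv : u = v
  · exact huv ▸ SimpleGraph.Reachable.refl u
  · exact SimpleGraph.Adj.reachable ((enhancedPowerGraph_prod_adj_iff hcop).mpr
      ⟨fun h => huv (Subtype.ext h), w, hu, hv⟩)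

variable {p : ℕ} [hp : Fact p.Prime]

theorem enhancedPowerGraph_prod_isDominating_iff [IsCyclic C]
    (hcop : ∀ a : P, (orderOf a).Coprime (Nat.card C)) (hP : IsPGroup p P)
    (hmany : 1 < Nat.card {H : Subgroup P // Nat.card H = p}) (v : P × C) :
    IsDominating (enhancedPowerGraph (P × C)) v ↔ v.1 = 1 := by
  refine ⟨fun hdom => ?_, fun h u hne =>
    (enhancedPowerGraph_prod_adj_iff hcop).mpr ⟨hne.symm, u.1, h ▸ one_mem _, mem_zpowers _⟩⟩
  by_contra hv
  have hfin := hP.isOfFinOrder hp.out.ne_zero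
  have : Finite {H : Subgroup P // Nat.card H = p} := Nat.finite_of_card_ne_zero (by omega)
  have := Finite.one_lt_card_iff_nontrivial.mp hmany
  obtain ⟨H, hH⟩ := exists_ne (α := {H : Subgroup P // Nat.card H = p})
    ⟨cyclicSubgroupOfOrder p v.1, card_cyclicSubgroupOfOrder (hfin _) (hP.dvd_orderOf hv)⟩
  obtain ⟨g, hg⟩ := exists_zpowers_eq_of_card_eq_prime H.2
  have hgp : orderOf g = p := by rw [← Nat.card_zpowers, hg, H.2]
  obtain ⟨w, hvw, hgw⟩ : ∃ w, v.1 ∈ zpowers w ∧ g ∈ zpowers w := by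
    by_cases hgv : (g, (1 : C)) = v
    · exact ⟨g, hgv ▸ mem_zpowers g, mem_zpowers g⟩
    · obtain ⟨-, w, hvw, hgw⟩ := (enhancedPowerGraph_prod_adj_iff hcop).mp (hdom _ hgv)
      exact ⟨w, hvw, hgw⟩
  refine hH (Subtype.ext ?_)
  calc (H : Subgroup P) = cyclicSubgroupOfOrder p g :=
        hg.symm.trans (cyclicSubgroupOfOrder_eq_zpowers hgp hp.out.pos).symm
    _ = cyclicSubgroupOfOrder p w :=
        cyclicSubgroupOfOrder_eq_of_mem_zpowers (hfin w) hgw (hgp ▸ dvd_rfl)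
    _ = cyclicSubgroupOfOrder p v.1 :=
        (cyclicSubgroupOfOrder_eq_of_mem_zpowers (hfin w) hvw (hP.dvd_orderOf hv)).symm

theorem card_connectedComponent_induce_fst_ne_one [IsCyclic C]
    (hcop : ∀ a : P, (orderOf a).Coprime (Nat.card C)) (hP : IsPGroup p P) :
    Nat.card ((enhancedPowerGraph (P × C)).induce {v | v.1 ≠ 1}).ConnectedComponent =
      Nat.card {H : Subgroup P // Nat.card H = p} := by
  have hfin := hP.isOfFinOrder hp.out.ne_zero
  refine SimpleGraph.card_connectedComponent_eq_of_surjective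
    (fun v => ⟨cyclicSubgroupOfOrder p v.1.1,
      card_cyclicSubgroupOfOrder (hfin _) (hP.dvd_orderOf v.2)⟩) ?_ ?_ ?_
  · intro u v huv
    obtain ⟨-, w, hu, hv⟩ := (enhancedPowerGraph_prod_adj_iff hcop).mp huv
    exact Subtype.ext ((cyclicSubgroupOfOrder_eq_of_mem_zpowers (hfin w) hu
      (hP.dvd_orderOf u.2)).trans
      (cyclicSubgroupOfOrder_eq_of_mem_zpowers (hfin w) hv (hP.dvd_orderOf v.2)).symm)
  · intro u v huv
    -- `u` and `v` are both joined to `(s, 1)`, where `s` generates their common subgroup.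
    set s := u.1.1 ^ (orderOf u.1.1 / p)
    have hsp : orderOf s = p := by
      rw [← Nat.card_zpowers]
      exact card_cyclicSubgroupOfOrder (hfin u.1.1) (hP.dvd_orderOf u.2)
    have huv' : cyclicSubgroupOfOrder p u.1.1 = cyclicSubgroupOfOrder p v.1.1 :=
      congrArg Subtype.val huv
    have hsv : s ∈ zpowers v.1.1 :=
      cyclicSubgroupOfOrder_le_zpowers p v.1.1 (huv' ▸ mem_zpowers s)
    exact (reachable_induce_fst_ne_one_of_mem_zpowers hcop
      (v := ⟨(s, 1), (orderOf_eq_prime_iff.mp hsp).2⟩) (mem_zpowers u.1.1)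
      (npow_mem_zpowers _ _)).trans
      (reachable_induce_fst_ne_one_of_mem_zpowers hcop hsv (mem_zpowers v.1.1))
  · intro H
    obtain ⟨g, hg⟩ := exists_zpowers_eq_of_card_eq_prime H.2
    have hgp : orderOf g = p := by rw [← Nat.card_zpowers, hg, H.2]
    refine ⟨⟨(g, 1), (orderOf_eq_prime_iff.mp hgp).2⟩, Subtype.ext ?_⟩
    change cyclicSubgroupOfOrder p g = H
    rw [cyclicSubgroupOfOrder_eq_zpowers hgp hp.out.pos, hg]

end Product

theorem one_lt_of_mul_sub_one_eq_pow_sub_one {k p r : ℕ} (hp : 1 < p) (hr : 2 ≤ r)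
    (h : k * (p - 1) = p ^ r - 1) : 1 < k := by
  have hpr : p < p ^ r := (pow_one p).symm.trans_lt (Nat.pow_lt_pow_right hp (by omega))
  by_contra! hk
  have : p ^ r - 1 ≤ 1 * (p - 1) := h ▸ Nat.mul_le_mul_right (p - 1) hk
  omega

theorem stmt_13_general {p : ℕ} (hp : p.Prime) (r : ℕ) (hr : 2 ≤ r)
    (t : Fin r → ℕ) (ht : ∀ i, 1 ≤ t i)
    (n : ℕ) (hcop : Nat.gcd p n = 1) :
    Nat.card ((enhancedPowerGraph
        (((i : Fin r) → Multiplicative (ZMod (p ^ t i))) × Multiplicative (ZMod n))).induce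
          {v | ¬ IsDominating (enhancedPowerGraph
            (((i : Fin r) → Multiplicative (ZMod (p ^ t i))) × Multiplicative (ZMod n))) v}
        ).ConnectedComponent = (p ^ r - 1) / (p - 1) := by
  have : Fact p.Prime := ⟨hp⟩
  let P := (i : Fin r) → Multiplicative (ZMod (p ^ t i))
  let C := Multiplicative (ZMod n)
  have hP : IsPGroup p P := isPGroup_pi_zmod t
  have hC (a : P) : (orderOf a).Coprime (Nat.card C) :=
    hP.orderOf_coprime (by rwa [Nat.card_multiplicative, Nat.card_zmod]) a
  have hcount : Nat.card {H : Subgroup P // Nat.card H = p} * (p - 1) = p ^ r - 1 := by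
    simpa only [Fintype.card_fin] using card_subgroups_of_prime_card_mul_pi_zmod (p := p) t ht
  have hmany : 1 < Nat.card {H : Subgroup P // Nat.card H = p} :=
    one_lt_of_mul_sub_one_eq_pow_sub_one hp.one_lt hr hcount
  have hdom : {v : P × C | ¬ IsDominating (enhancedPowerGraph (P × C)) v} = {v | v.1 ≠ 1} :=
    Set.ext fun v => (enhancedPowerGraph_prod_isDominating_iff hC hP hmany v).not
  rw [hdom, card_connectedComponent_induce_fst_ne_one hC hP]
  exact (Nat.div_eq_of_eq_mul_left (Nat.sub_pos_of_lt hp.one_lt) hcount.symm).symm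

theorem stmt_13 {p : ℕ} (hp : p.Prime) (r : ℕ) (hr : 2 ≤ r)
    (t : Fin r → ℕ) (ht : ∀ i, 1 ≤ t i)
    (n : ℕ) (hn : 0 < n) (hcop : Nat.gcd p n = 1) :
    Nat.card ((enhancedPowerGraph
        (((i : Fin r) → Multiplicative (ZMod (p ^ t i))) × Multiplicative (ZMod n))).induce
          {v | ¬ IsDominating (enhancedPowerGraph
            (((i : Fin r) → Multiplicative (ZMod (p ^ t i))) × Multiplicative (ZMod n))) v}
        ).ConnectedComponent = (p ^ r - 1) / (p - 1) :=
  stmt_13_general hp r hr t ht n hcop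
end

section
/- A finite abelian p-group G with at least 2 distinct subgroups of order p contains exactly p^r − 1 elements of order p, where r is the number of cyclic factors in its decomposition; moreover every component of the identity-deleted enhanced power graph contains exactly p − 1 elements of order p. -/
/-!
The elements of order `p` of `∏ ℤ/p^{tᵢ}` are the non-identity elements of the `p`-torsion
subgroup, which is a product of `r` cyclic groups of order `p`.

For the components: a non-identity element `g` of a finite `p`-group has a unique subgroup of
order `p` in `⟨g⟩`, its cyclic socle. Adjacent vertices lie in a common cyclic group `⟨w⟩`, whose
subgroups are determined by their orders, so they have the same socle; conversely every vertex is
joined to a generator of its socle. Hence the components are exactly the fibres of the socle map,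
and the elements of order `p` in the fibre over `S` are the `p - 1` generators of `S`.
-/

open Subgroup

section Cyclic

variable {G : Type*} [Group G]

theorem IsCyclic.zpowers_eq_setOf_pow_orderOf_eq_one [Finite G] [IsCyclic G] (x : G) :
    (zpowers x : Set G) = {c | c ^ orderOf x = 1} := by
  classical
  have : Fintype G := Fintype.ofFinite G
  refine Set.eq_of_subset_of_ncard_le (fun c hc => ?_) ?_ (Set.toFinite _)
  · obtain ⟨k, rfl⟩ := mem_zpowers_iff.mp hc
    rw [Set.mem_ofPred_eq, ← zpow_natCast, ← zpow_mul, mul_comm, zpow_mul, zpow_natCast,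
      pow_orderOf_eq_one, one_zpow]
  · rw [Set.ncard_eq_toFinset_card', Set.toFinset_ofPred, ← Nat.card_coe_set_eq,
      SetLike.coe_sort_coe, Nat.card_zpowers]
    exact IsCyclic.card_pow_eq_one_le (orderOf_pos x)

theorem IsCyclic.zpowers_eq_of_orderOf_eq [Finite G] [IsCyclic G] {x y : G}
    (h : orderOf x = orderOf y) : zpowers x = zpowers y :=
  SetLike.coe_injective <| by
    rw [zpowers_eq_setOf_pow_orderOf_eq_one, zpowers_eq_setOf_pow_orderOf_eq_one, h]

theorem zpowers_eq_of_orderOf_eq_of_mem_zpowers [Finite G] {w x y : G} (hx : x ∈ zpowers w)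
    (hy : y ∈ zpowers w) (h : orderOf x = orderOf y) : zpowers x = zpowers y := by
  have hC : zpowers (⟨x, hx⟩ : zpowers w) = zpowers ⟨y, hy⟩ :=
    IsCyclic.zpowers_eq_of_orderOf_eq (by rwa [orderOf_mk, orderOf_mk])
  simpa only [MonoidHom.map_zpowers, coe_subtype] using congrArg (map (zpowers w).subtype) hC

theorem IsCyclic.card_setOf_pow_eq_one {C : Type*} [CommGroup C] [Finite C] [IsCyclic C]
    (n : ℕ) : Nat.card {c : C | c ^ n = 1} = (Nat.card C).gcd n :=
  IsCyclic.card_powMonoidHom_ker C n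

end Cyclic

theorem card_setOf_orderOf_eq_prime {G : Type*} [Monoid G] [Finite G] {p : ℕ} (hp : p.Prime) :
    Nat.card {g : G | orderOf g = p} = Nat.card {g : G | g ^ p = 1} - 1 := by
  have := Fact.mk hp
  have hset : {g : G | orderOf g = p} = {g | g ^ p = 1} \ {1} := by
    ext g
    simp only [Set.mem_ofPred_eq, orderOf_eq_prime_iff, Set.mem_sdiff, Set.mem_singleton_iff]
  rw [hset, Nat.card_coe_set_eq,
    Set.ncard_sdiff_singleton_of_mem (s := {g : G | g ^ p = 1}) (one_pow p), Nat.card_coe_set_eq]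

theorem Pi.card_setOf_pow_eq_one {ι : Type*} [Fintype ι] {M : ι → Type*} [∀ i, Monoid (M i)]
    (n : ℕ) : Nat.card {g : ∀ i, M i | g ^ n = 1} = ∏ i, Nat.card {x : M i | x ^ n = 1} := by
  rw [← Nat.card_pi]
  exact Nat.card_congr ((Equiv.subtypeEquivRight fun g => funext_iff).trans
    (Equiv.subtypePiEquivPi (p := fun i x => x ^ n = 1)))

section Socle

variable {G : Type*} [Group G] {p : ℕ}

noncomputable def cyclicSocle (p : ℕ) (g : G) : Subgroup G :=
  zpowers (g ^ (orderOf g / p))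

theorem cyclicSocle_le_zpowers (g : G) : cyclicSocle p g ≤ zpowers g :=
  zpowers_le_of_mem (npow_mem_zpowers g _)

theorem cyclicSocle_eq_zpowers_of_orderOf_eq {g : G} (hp : 0 < p) (hg : orderOf g = p) :
    cyclicSocle p g = zpowers g := by
  rw [cyclicSocle, hg, Nat.div_self hp, pow_one]

variable [Fact p.Prime]

theorem IsPGroup.orderOf_pow_orderOf_div_eq (hG : IsPGroup p G) {g : G} (hg : g ≠ 1) :
    orderOf (g ^ (orderOf g / p)) = p := by
  obtain ⟨k, hk⟩ := IsPGroup.iff_orderOf.mp hG g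
  have hk0 : k ≠ 0 := by
    rintro rfl
    exact hg (orderOf_eq_one_iff.mp (by rw [hk, pow_zero]))
  refine orderOf_pow_orderOf_div ?_ ?_ <;> rw [hk]
  · exact pow_ne_zero k (Fact.out : p.Prime).ne_zero
  · exact dvd_pow_self p hk0

theorem IsPGroup.pow_orderOf_div_ne_one (hG : IsPGroup p G) {g : G} (hg : g ≠ 1) :
    g ^ (orderOf g / p) ≠ 1 := fun h1 => (Fact.out : p.Prime).ne_one <| by
  rw [← hG.orderOf_pow_orderOf_div_eq hg, h1, orderOf_one]

theorem IsPGroup.card_cyclicSocle (hG : IsPGroup p G) {g : G} (hg : g ≠ 1) :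
    Nat.card (cyclicSocle p g) = p := by
  rw [cyclicSocle, Nat.card_zpowers, hG.orderOf_pow_orderOf_div_eq hg]

theorem IsPGroup.cyclicSocle_eq_of_mem_zpowers [Finite G] (hG : IsPGroup p G) {g h w : G}
    (hg : g ≠ 1) (hh : h ≠ 1) (hgw : g ∈ zpowers w) (hhw : h ∈ zpowers w) :
    cyclicSocle p g = cyclicSocle p h :=
  zpowers_eq_of_orderOf_eq_of_mem_zpowers (zpowers_le_of_mem hgw (cyclicSocle_le_zpowers g
    (mem_zpowers _))) (zpowers_le_of_mem hhw (cyclicSocle_le_zpowers h (mem_zpowers _)))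
    (by rw [hG.orderOf_pow_orderOf_div_eq hg, hG.orderOf_pow_orderOf_div_eq hh])

end Socle

namespace enhancedPowerGraph

variable {G : Type*} [Group G] {p : ℕ}

theorem reachable_of_mem_zpowers {u v : {g : G | g ≠ 1}} {w : G} (hu : (u : G) ∈ zpowers w)
    (hv : (v : G) ∈ zpowers w) : ((enhancedPowerGraph G).induce {g | g ≠ 1}).Reachable u v := by
  obtain rfl | hne := eq_or_ne u v
  · rfl
  · exact SimpleGraph.Adj.reachable ⟨Subtype.coe_injective.ne hne, w, hu, hv⟩

variable [Fact p.Prime] [Finite G]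

theorem reachable_iff_cyclicSocle_eq (hG : IsPGroup p G) {u v : {g : G | g ≠ 1}} :
    ((enhancedPowerGraph G).induce {g | g ≠ 1}).Reachable u v ↔
      cyclicSocle p (u : G) = cyclicSocle p (v : G) := by
  constructor
  · rintro ⟨walk⟩
    induction walk with
    | nil => rfl
    | @cons a b _ hadj _ ih =>
      obtain ⟨-, w, hu, hv⟩ := hadj
      exact (hG.cyclicSocle_eq_of_mem_zpowers a.2 b.2 hu hv).trans ih
  · intro h
    let socleGen (x : {g : G | g ≠ 1}) : {g : G | g ≠ 1} :=
      ⟨(x : G) ^ (orderOf (x : G) / p), hG.pow_orderOf_div_ne_one x.2⟩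
    have toSocleGen (x : {g : G | g ≠ 1}) :
        ((enhancedPowerGraph G).induce {g | g ≠ 1}).Reachable x (socleGen x) :=
      reachable_of_mem_zpowers (mem_zpowers _) (npow_mem_zpowers _ _)
    have hv : (socleGen v : G) ∈ cyclicSocle p (u : G) := h ▸ mem_zpowers _
    exact (toSocleGen u).trans <|
      (reachable_of_mem_zpowers (w := (socleGen u : G)) (mem_zpowers _) hv).trans (toSocleGen v).symm

theorem connectedComponentMk_eq_and_orderOf_eq_iff (hG : IsPGroup p G)
    (v₀ v : {g : G | g ≠ 1}) :
    ((enhancedPowerGraph G).induce {g | g ≠ 1}).connectedComponentMk v =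
        ((enhancedPowerGraph G).induce {g | g ≠ 1}).connectedComponentMk v₀ ∧
      orderOf (v : G) = p ↔ (v : G) ∈ cyclicSocle p (v₀ : G) := by
  have hp : p.Prime := Fact.out
  rw [SimpleGraph.ConnectedComponent.eq, reachable_iff_cyclicSocle_eq hG]
  constructor
  · rintro ⟨hsocle, hord⟩
    rw [← hsocle, cyclicSocle_eq_zpowers_of_orderOf_eq hp.pos hord]
    exact mem_zpowers _
  · intro hv
    have hord : orderOf (v : G) = p := by
      refine (hp.eq_one_or_self_of_dvd _ ?_).resolve_left fun h => v.2 (orderOf_eq_one_iff.mp h)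
      rw [← hG.orderOf_pow_orderOf_div_eq v₀.2]
      exact orderOf_dvd_of_mem_zpowers hv
    refine ⟨?_, hord⟩
    rw [cyclicSocle_eq_zpowers_of_orderOf_eq hp.pos hord, cyclicSocle]
    exact zpowers_eq_of_orderOf_eq_of_mem_zpowers hv (mem_zpowers _)
      (by rw [hord, hG.orderOf_pow_orderOf_div_eq v₀.2])

theorem card_component_orderOf_eq_prime (hG : IsPGroup p G)
    (c : ((enhancedPowerGraph G).induce {g | g ≠ 1}).ConnectedComponent) :
    Nat.card {v : {g : G // g ≠ 1} |
      ((enhancedPowerGraph G).induce {g | g ≠ 1}).connectedComponentMk v = c ∧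
        orderOf (v : G) = p} = p - 1 := by
  induction c using SimpleGraph.ConnectedComponent.ind with
  | h v₀ =>
    have hset : {v : {g : G // g ≠ 1} |
        ((enhancedPowerGraph G).induce {g | g ≠ 1}).connectedComponentMk v =
          ((enhancedPowerGraph G).induce {g | g ≠ 1}).connectedComponentMk v₀ ∧
          orderOf (v : G) = p} = Subtype.val ⁻¹' ((cyclicSocle p (v₀ : G) : Set G) \ {1}) := by
      ext v
      simp only [Set.mem_ofPred_eq, connectedComponentMk_eq_and_orderOf_eq_iff hG v₀ v,
        Set.mem_preimage, Set.mem_sdiff, SetLike.mem_coe, Set.mem_singleton_iff, v.2,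
        not_false_eq_true, and_true]
    have hrange : (cyclicSocle p (v₀ : G) : Set G) \ {1} ⊆
        Set.range (Subtype.val : {g : G // g ≠ 1} → G) :=
      fun x hx => ⟨⟨x, hx.2⟩, rfl⟩
    rw [Nat.card_coe_set_eq, hset,
      Set.ncard_preimage_of_injective_subset_range Subtype.val_injective hrange,
      Set.ncard_sdiff_singleton_of_mem (one_mem _), ← Nat.card_coe_set_eq,
      SetLike.coe_sort_coe, hG.card_cyclicSocle v₀.2]

end enhancedPowerGraph

theorem stmt_14_general {p : ℕ} (hp : p.Prime) (r : ℕ)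
    (t : Fin r → ℕ) (ht : ∀ i, 1 ≤ t i) :
    Nat.card {g : (i : Fin r) → Multiplicative (ZMod (p ^ t i)) | orderOf g = p} =
        p ^ r - 1 ∧
      ∀ c : ((enhancedPowerGraph
          ((i : Fin r) → Multiplicative (ZMod (p ^ t i)))).induce
            {g | g ≠ 1}).ConnectedComponent,
        Nat.card {v : {g : (i : Fin r) → Multiplicative (ZMod (p ^ t i)) // g ≠ 1} |
          ((enhancedPowerGraph
            ((i : Fin r) → Multiplicative (ZMod (p ^ t i)))).induce
              {g | g ≠ 1}).connectedComponentMk v = c ∧ orderOf (v : (i : Fin r) → Multiplicative (ZMod (p ^ t i))) = p} = p - 1 := by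
  have := Fact.mk hp
  have (i : Fin r) : NeZero (p ^ t i) := ⟨pow_ne_zero _ hp.ne_zero⟩
  have hcard (i : Fin r) : Nat.card (Multiplicative (ZMod (p ^ t i))) = p ^ t i :=
    Nat.card_zmod _
  have hG : IsPGroup p ((i : Fin r) → Multiplicative (ZMod (p ^ t i))) := by
    refine IsPGroup.of_card (n := ∑ i, t i) ?_
    rw [Nat.card_pi, Finset.prod_congr rfl fun i _ => hcard i, Finset.prod_pow_eq_pow_sum]
  refine ⟨?_, enhancedPowerGraph.card_component_orderOf_eq_prime hG⟩
  rw [card_setOf_orderOf_eq_prime hp, Pi.card_setOf_pow_eq_one,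
    Finset.prod_congr rfl fun i _ => IsCyclic.card_setOf_pow_eq_one p,
    Finset.prod_congr rfl fun i _ => by
      rw [hcard i, Nat.gcd_eq_right (dvd_pow_self p (Nat.one_le_iff_ne_zero.mp (ht i)))],
    Finset.prod_const, Finset.card_univ, Fintype.card_fin]

theorem stmt_14 {p : ℕ} (hp : p.Prime) (r : ℕ) (hr : 2 ≤ r)
    (t : Fin r → ℕ) (ht : ∀ i, 1 ≤ t i) :
    Nat.card {g : (i : Fin r) → Multiplicative (ZMod (p ^ t i)) | orderOf g = p} =
        p ^ r - 1 ∧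
      ∀ c : ((enhancedPowerGraph
          ((i : Fin r) → Multiplicative (ZMod (p ^ t i)))).induce
            {g | g ≠ 1}).ConnectedComponent,
        Nat.card {v : {g : (i : Fin r) → Multiplicative (ZMod (p ^ t i)) // g ≠ 1} |
          ((enhancedPowerGraph
            ((i : Fin r) → Multiplicative (ZMod (p ^ t i)))).induce
              {g | g ≠ 1}).connectedComponentMk v = c ∧ orderOf (v : (i : Fin r) → Multiplicative (ZMod (p ^ t i))) = p} = p - 1 :=
  stmt_14_general hp r t ht
end

section
/- Let G be a finite group and let v ≠ e be a dominating vertex of the enhanced power graph of G whose order is divisible by a prime p. Then every element of order p in G lies in the cyclic subgroup of order p contained in ⟨v⟩. -/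
namespace Subgroup

variable {G : Type*} [Group G] {w x : G}

theorem mem_zpowers_pow_orderOf_div (hw : IsOfFinOrder w) (hx : x ∈ zpowers w) :
    x ∈ zpowers (w ^ (orderOf w / orderOf x)) := by
  obtain ⟨k, rfl⟩ := mem_zpowers_iff.mp hx
  have hd : orderOf (w ^ k) ∣ orderOf w := orderOf_dvd_of_mem_zpowers hx
  have hn : ((orderOf w / orderOf (w ^ k) : ℕ) : ℤ) * orderOf (w ^ k) ∣ k * orderOf (w ^ k) := by
    rw [← Nat.cast_mul, Nat.div_mul_cancel hd, orderOf_dvd_iff_zpow_eq_one, zpow_mul,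
      zpow_natCast, pow_orderOf_eq_one]
  obtain ⟨j, hj⟩ := Int.dvd_of_mul_dvd_mul_right
    (Int.natCast_ne_zero.mpr (Nat.pos_of_dvd_of_pos hd hw.orderOf_pos).ne') hn
  exact mem_zpowers_iff.mpr ⟨j, by rw [← zpow_natCast, ← zpow_mul, ← hj]⟩

theorem zpowers_eq_zpowers_pow_orderOf_div (hw : IsOfFinOrder w) (hx : x ∈ zpowers w) :
    zpowers x = zpowers (w ^ (orderOf w / orderOf x)) := by
  have hz : orderOf (w ^ (orderOf w / orderOf x)) = orderOf x :=
    orderOf_pow_orderOf_div hw.orderOf_pos.ne' (orderOf_dvd_of_mem_zpowers hx)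
  have : Finite (zpowers (w ^ (orderOf w / orderOf x))) := (hw.pow.finite_zpowers).to_subtype
  exact eq_of_le_of_card_ge (zpowers_le.mpr (mem_zpowers_pow_orderOf_div hw hx))
    (by rw [Nat.card_zpowers, Nat.card_zpowers, hz])

theorem zpowers_eq_zpowers_of_orderOf_eq {y : G} (hw : IsOfFinOrder w) (hx : x ∈ zpowers w)
    (hy : y ∈ zpowers w) (hxy : orderOf x = orderOf y) : zpowers x = zpowers y := by
  rw [zpowers_eq_zpowers_pow_orderOf_div hw hx, zpowers_eq_zpowers_pow_orderOf_div hw hy, hxy]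

end Subgroup

theorem stmt_19_general {G : Type*} [Group G] [Finite G] (v : G)
    (hdom : IsDominating (enhancedPowerGraph G) v)
    (p : ℕ) (hpv : p ∣ orderOf v) :
    ∀ x : G, orderOf x = p → x ∈ Subgroup.zpowers (v ^ (orderOf v / p)) := by
  intro x hx
  obtain ⟨w, hvw, hxw⟩ : ∃ w, v ∈ Subgroup.zpowers w ∧ x ∈ Subgroup.zpowers w := by
    by_cases hxv : x = v
    · exact ⟨v, Subgroup.mem_zpowers v, hxv ▸ Subgroup.mem_zpowers v⟩
    · exact (hdom x hxv).2
  have hp : orderOf (v ^ (orderOf v / p)) = p := orderOf_pow_orderOf_div (orderOf_pos v).ne' hpv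
  rw [← Subgroup.zpowers_eq_zpowers_of_orderOf_eq (isOfFinOrder_of_finite w) hxw
    (Subgroup.pow_mem _ hvw _) (hx.trans hp.symm)]
  exact Subgroup.mem_zpowers x

theorem stmt_19 {G : Type*} [Group G] [Finite G] (v : G) (hv : v ≠ 1)
    (hdom : IsDominating (enhancedPowerGraph G) v)
    (p : ℕ) (hp : p.Prime) (hpv : p ∣ orderOf v) :
    ∀ x : G, orderOf x = p → x ∈ Subgroup.zpowers (v ^ (orderOf v / p)) :=
  stmt_19_general v hdom p hpv
end
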